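/- arXiv:1309.5348 — 5 statements merged into one kernel-verified Lean document; each statement's English description precedes it below -/
import Mathlib

section
/- Let I be a homogeneous ideal of a polynomial ring A = K[X_1,...,X_n] and let G = {f_1,...,f_r} be the reduced Gröbner basis of I with respect to a monomial order ≺. Then for each i, the support of f_i is a minimal element (with respect to inclusion) among the supports of nonzero polynomials in I; that is, supp(G) ⊆ cs(I). -/
open MvPolynomial

/-- The circuits set of a set of polynomials: minimal supports (w.r.t. inclusion)
of nonzero elements. -/
def cs {σ R : Type*} [CommSemiring R] (S : Set (MvPolynomial σ R)) : Set (Finset (σ →₀ ℕ)) :=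
  {s | (∃ f ∈ S, f ≠ 0 ∧ f.support = s) ∧
       ∀ g ∈ S, g ≠ 0 → g.support ⊆ s → g.support = s}

/-- A homogeneous ideal: one containing all homogeneous components of its elements. -/
def IsHomogIdeal {σ R : Type*} [CommSemiring R] (I : Ideal (MvPolynomial σ R)) : Prop :=
  ∀ f ∈ I, ∀ d : ℕ, MvPolynomial.homogeneousComponent d f ∈ I
/-- A (strict) monomial order on exponent vectors: a strict total order compatible
with addition of exponent vectors (i.e. multiplication of monomials). -/
def IsMonomialOrder (n : ℕ) (r : (Fin n →₀ ℕ) → (Fin n →₀ ℕ) → Prop) : Prop :=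
  IsTrichotomous _ r ∧ IsTrans _ r ∧ IsIrrefl _ r ∧
  (∀ a b c : Fin n →₀ ℕ, r a b → r (a + c) (b + c)) ∧
  (∀ a c : Fin n →₀ ℕ, c ≠ 0 → r a (a + c))

/-- `m` is the leading (initial) monomial of `f` with respect to the order `r`. -/
def leadOf {K : Type*} [Field K] {n : ℕ} (r : (Fin n →₀ ℕ) → (Fin n →₀ ℕ) → Prop)
    (f : MvPolynomial (Fin n) K) (m : Fin n →₀ ℕ) : Prop :=
  m ∈ f.support ∧ ∀ m' ∈ f.support, m' = m ∨ r m' m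

/-- The initial ideal of `I` with respect to a monomial order `r`. -/
noncomputable def iniIdeal {K : Type*} [Field K] {n : ℕ} (r : (Fin n →₀ ℕ) → (Fin n →₀ ℕ) → Prop)
    (I : Ideal (MvPolynomial (Fin n) K)) : Ideal (MvPolynomial (Fin n) K) :=
  Ideal.span {p | ∃ f ∈ I, f ≠ 0 ∧ ∃ m, leadOf r f m ∧ p = monomial m (1 : K)}

/-- `G` is a Gröbner basis of `I` with respect to `r`. -/
def IsGB {K : Type*} [Field K] {n : ℕ} (r : (Fin n →₀ ℕ) → (Fin n →₀ ℕ) → Prop)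
    (I : Ideal (MvPolynomial (Fin n) K)) (G : Finset (MvPolynomial (Fin n) K)) : Prop :=
  (G : Set (MvPolynomial (Fin n) K)) ⊆ I ∧ (0 : MvPolynomial (Fin n) K) ∉ G ∧
  iniIdeal r I = Ideal.span {p | ∃ f ∈ G, ∃ m, leadOf r f m ∧ p = monomial m (1 : K)}

/-- `G` is the reduced Gröbner basis of `I` with respect to `r`: a Gröbner basis of
monic elements such that the leading monomial of each element divides no monomial in
the support of any other element. -/
def IsRGB {K : Type*} [Field K] {n : ℕ} (r : (Fin n →₀ ℕ) → (Fin n →₀ ℕ) → Prop)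
    (I : Ideal (MvPolynomial (Fin n) K)) (G : Finset (MvPolynomial (Fin n) K)) : Prop :=
  IsGB r I G ∧
  (∀ f ∈ G, ∀ m, leadOf r f m → coeff m f = 1) ∧
  (∀ f ∈ G, ∀ g ∈ G, f ≠ g → ∀ mf, leadOf r f mf → ∀ m ∈ g.support, ¬ mf ≤ m)

lemma exists_max_rel {α : Type*} (r : α → α → Prop) (ht : IsTrichotomous α r)
    (htr : IsTrans α r) (s : Finset α) :
    s.Nonempty → ∃ m ∈ s, ∀ m' ∈ s, m' = m ∨ r m' m := by
  classical
  induction s using Finset.induction_on with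
  | empty => rintro ⟨x, hx⟩; simp at hx
  | insert _ _ ha ih =>
    rename_i a s
    intro _
    rcases s.eq_empty_or_nonempty with rfl | hs'
    · exact ⟨a, by simp, by simp⟩
    · obtain ⟨m, hm, hmax⟩ := ih hs'
      rcases (show r a m ∨ a = m ∨ r m a from if h1 : r a m then Or.inl h1 else if h2 : r m a then Or.inr (Or.inr h2) else Or.inr (Or.inl (ht.1 a m h1 h2))) with h | h | h
      · refine ⟨m, Finset.mem_insert_of_mem hm, ?_⟩
        intro m' hm'
        rcases Finset.mem_insert.1 hm' with rfl | hm'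
        · exact Or.inr h
        · exact hmax m' hm'
      · exact ⟨m, Finset.mem_insert_of_mem hm, fun m' hm' =>
          (Finset.mem_insert.1 hm').elim (fun he => Or.inl (he.trans h)) (hmax m')⟩
      · refine ⟨a, Finset.mem_insert_self a s, ?_⟩
        intro m' hm'
        rcases Finset.mem_insert.1 hm' with rfl | hm'
        · exact Or.inl rfl
        · rcases hmax m' hm' with rfl | h'
          · exact Or.inr h
          · exact Or.inr (htr.1 _ _ _ h' h)

lemma leadOf_eq_of_le {K : Type*} [Field K] {n : ℕ}
    {r : (Fin n →₀ ℕ) → (Fin n →₀ ℕ) → Prop} (hr : IsMonomialOrder n r)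
    {f : MvPolynomial (Fin n) K} {mf m : Fin n →₀ ℕ}
    (hlf : leadOf r f mf) (hm : m ∈ f.support) (hle : mf ≤ m) : mf = m := by
  obtain ⟨-, htrans, hirr, -, hpos⟩ := hr
  obtain ⟨c, rfl⟩ := le_iff_exists_add.1 hle
  rcases eq_or_ne c 0 with rfl | hc
  · simp
  · rcases hlf.2 _ hm with h | h
    · exact h.symm
    · exact absurd (htrans.1 _ _ _ (hpos mf c hc) h) (hirr.1 mf)

/-- The supports of the elements of the reduced Gröbner basis of a
homogeneous ideal `I` with respect to a monomial order belong to the circuits set of `I`. -/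
theorem supp_reduced_groebner_mem_cs {K : Type*} [Field K] {n : ℕ}
    (r : (Fin n →₀ ℕ) → (Fin n →₀ ℕ) → Prop) (hr : IsMonomialOrder n r)
    (I : Ideal (MvPolynomial (Fin n) K)) (hI : IsHomogIdeal I)
    (G : Finset (MvPolynomial (Fin n) K)) (hG : IsRGB r I G) :
    ∀ f ∈ G, f.support ∈ cs (I : Set (MvPolynomial (Fin n) K)) := by
  classical
  obtain ⟨⟨hGI, hG0, hini⟩, hmonic, hred⟩ := hG
  obtain ⟨htri, htrans, hirr, hadd, hpos⟩ := hr
  have hrm : IsMonomialOrder n r := ⟨htri, htrans, hirr, hadd, hpos⟩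
  intro f hf
  have hfI : f ∈ I := hGI hf
  have hf0 : f ≠ 0 := fun h => hG0 (h ▸ hf)
  have hlead : ∀ h : MvPolynomial (Fin n) K, h ≠ 0 → ∃ m, leadOf r h m := by
    intro h h0
    exact exists_max_rel r htri htrans h.support (support_nonempty.2 h0)
  have hset : {p | ∃ f ∈ G, ∃ m, leadOf r f m ∧ p = monomial m (1 : K)}
      = (fun m => monomial m (1 : K)) '' {m | ∃ f ∈ G, leadOf r f m} := by
    ext p
    constructor
    · rintro ⟨f', hf', m, hm, rfl⟩; exact ⟨m, ⟨f', hf', hm⟩, rfl⟩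
    · rintro ⟨m, ⟨f', hf', hm⟩, rfl⟩; exact ⟨f', hf', m, hm, rfl⟩
  have key : ∀ h ∈ I, h ≠ 0 → ∀ mh, leadOf r h mh → mh ∈ f.support → leadOf r f mh := by
    intro h hhI h0 mh hmh hmhf
    have hmem : (monomial mh (1 : K)) ∈ iniIdeal r I :=
      Ideal.subset_span ⟨h, hhI, h0, mh, hmh, rfl⟩
    rw [hini, hset] at hmem
    have := mem_ideal_span_monomial_image.1 hmem mh (by
      rw [support_monomial, if_neg (one_ne_zero (α := K))]; exact Finset.mem_singleton_self _)
    obtain ⟨m', ⟨f', hf', hlf'⟩, hle⟩ := this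
    have hff : f' = f := by
      by_contra hne
      exact hred f' hf' f hf hne m' hlf' mh hmhf hle
    subst hff
    have heq : m' = mh := leadOf_eq_of_le hrm hlf' hmhf hle
    exact heq ▸ hlf'
  refine ⟨⟨f, hfI, hf0, rfl⟩, ?_⟩
  intro g hgI hg0 hsub
  obtain ⟨mg, hmg⟩ := hlead g hg0
  have hmgf : mg ∈ f.support := hsub hmg.1
  have hlfmg : leadOf r f mg := key g hgI hg0 mg hmg hmgf
  set c : K := coeff mg g with hc
  have hc0 : c ≠ 0 := mem_support_iff.1 hmg.1
  set h : MvPolynomial (Fin n) K := f - c⁻¹ • g with hh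
  have hhI : h ∈ I := by
    rw [hh, smul_eq_C_mul]
    exact Submodule.sub_mem I hfI (I.mul_mem_left _ hgI)
  have hcoeff : coeff mg h = 0 := by
    rw [hh, coeff_sub, coeff_smul, smul_eq_mul, ← hc, inv_mul_cancel₀ hc0,
      hmonic f hf mg hlfmg, sub_self]
  have hzero : h = 0 := by
    by_contra h0
    obtain ⟨mh, hmh⟩ := hlead h h0
    have hmhf : mh ∈ f.support := by
      have h1 : h.support ⊆ f.support ∪ (c⁻¹ • g).support := support_sub _ _ _
      have h2 : (c⁻¹ • g).support ⊆ g.support := support_smul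
      rcases Finset.mem_union.1 (h1 hmh.1) with h3 | h3
      · exact h3
      · exact hsub (h2 h3)
    have hlfmh : leadOf r f mh := key h hhI h0 mh hmh hmhf
    have hmm : mh = mg := by
      rcases hlfmg.2 mh hlfmh.1 with h4 | h4
      · exact h4
      · rcases hlfmh.2 mg hlfmg.1 with h5 | h5
        · exact h5.symm
        · exact absurd (htrans.1 _ _ _ h4 h5) (hirr.1 mh)
    rw [hmm] at hmh
    exact mem_support_iff.1 hmh.1 hcoeff
  have hfg : f = c⁻¹ • g := sub_eq_zero.1 hzero
  refine Finset.Subset.antisymm hsub ?_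
  rw [hfg]
  exact support_smul
end

section
/- There exist homogeneous ideals I ≠ J in K[X_1, X_2] (char K ≠ 2) with cs(I) = cs(J); specifically I = (X_1 + X_2) + (X_1, X_2)^2 and J = (X_1 - X_2) + (X_1, X_2)^2 are distinct but have the same circuits set. -/
set_option maxRecDepth 4000


open MvPolynomial

noncomputable section

variable {K : Type*} [Field K]



/-- sign flip automorphism -/
def phi : MvPolynomial (Fin 2) K →ₐ[K] MvPolynomial (Fin 2) K :=
  aeval ![X 0, -X 1]

lemma phi_X0 : phi (X 0 : MvPolynomial (Fin 2) K) = X 0 := by simp [phi]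
lemma phi_X1 : phi (X 1 : MvPolynomial (Fin 2) K) = -X 1 := by simp [phi]

lemma phi_phi (f : MvPolynomial (Fin 2) K) : phi (phi f) = f := by
  have : (phi.comp phi : MvPolynomial (Fin 2) K →ₐ[K] _) = AlgHom.id K _ := by
    apply MvPolynomial.algHom_ext
    intro i
    fin_cases i <;> simp [phi_X0, phi_X1]
  simpa using congrArg (fun g => g f) this

lemma phi_monomial (e : Fin 2 →₀ ℕ) (c : K) :
    phi (monomial e c) = monomial e ((-1) ^ (e 1) * c) := by
  rw [phi, aeval_monomial, monomial_eq]
  rw [Finsupp.prod_fintype _ _ (fun i => pow_zero _),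
      Finsupp.prod_fintype _ _ (fun i => pow_zero _)]
  rw [Fin.prod_univ_two, Fin.prod_univ_two]
  simp only [Matrix.cons_val_zero, Matrix.cons_val_one, Matrix.head_cons, algebraMap_eq,
    neg_pow (X 1 : MvPolynomial (Fin 2) K), C_mul, C_pow, C_neg, C_1]
  ring

lemma coeff_phi (d : Fin 2 →₀ ℕ) (f : MvPolynomial (Fin 2) K) :
    coeff d (phi f) = (-1) ^ (d 1) * coeff d f := by
  induction f using MvPolynomial.induction_on' with
  | monomial e c =>
    rw [phi_monomial]
    simp only [coeff_monomial]
    split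
    · rename_i h; subst h; ring
    · ring
  | add p q hp hq => simp [map_add, coeff_add, hp, hq, mul_add]

lemma support_phi (f : MvPolynomial (Fin 2) K) : (phi f).support = f.support := by
  ext d
  simp only [mem_support_iff, coeff_phi]
  constructor
  · intro h hc; exact h (by rw [hc, mul_zero])
  · intro h; exact mul_ne_zero (pow_ne_zero _ (by norm_num)) h

abbrev PP : Ideal (MvPolynomial (Fin 2) K) := Ideal.span {X 0, X 1}
abbrev Ip : Ideal (MvPolynomial (Fin 2) K) := Ideal.span {X 0 + X 1} ⊔ PP ^ 2
abbrev Jm : Ideal (MvPolynomial (Fin 2) K) := Ideal.span {X 0 - X 1} ⊔ PP ^ 2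

lemma map_phi_P_le : Ideal.map (phi (K := K)) PP ≤ PP := by
  rw [Ideal.map_span, Ideal.span_le]
  rintro x hx
  simp only [Set.image_insert_eq, Set.image_singleton, phi_X0, phi_X1,
    Set.mem_insert_iff, Set.mem_singleton_iff] at hx
  rcases hx with rfl | rfl
  · exact Ideal.subset_span (by simp)
  · exact neg_mem (Ideal.subset_span (by simp))

lemma mem_Ip_phi (f : MvPolynomial (Fin 2) K) (hf : f ∈ Ip) : phi f ∈ Jm := by
  have : phi f ∈ Ideal.map (phi (K := K)) Ip := Ideal.mem_map_of_mem _ hf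
  rw [Ideal.map_sup, Ideal.map_span, Ideal.map_pow] at this
  refine (sup_le_sup ?_ ?_ : _ ≤ Jm) this
  · rw [Set.image_singleton, Ideal.span_le]
    intro x hx
    simp only [Set.mem_singleton_iff] at hx
    subst hx
    simp only [map_add, phi_X0, phi_X1]
    exact Ideal.subset_span (by simp [sub_eq_add_neg])
  · exact Ideal.pow_right_mono map_phi_P_le 2
lemma mem_Jm_phi (f : MvPolynomial (Fin 2) K) (hf : f ∈ Jm) : phi f ∈ Ip := by
  have : phi f ∈ Ideal.map (phi (K := K)) Jm := Ideal.mem_map_of_mem _ hf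
  rw [Ideal.map_sup, Ideal.map_span, Ideal.map_pow] at this
  refine (sup_le_sup ?_ ?_ : _ ≤ Ip) this
  · rw [Set.image_singleton, Ideal.span_le]
    intro x hx
    simp only [Set.mem_singleton_iff] at hx
    subst hx
    simp only [map_sub, phi_X0, phi_X1, sub_neg_eq_add]
    exact Ideal.subset_span (by simp)
  · exact Ideal.pow_right_mono map_phi_P_le 2

lemma cs_subset {A B : Set (MvPolynomial (Fin 2) K)}
    (hAB : ∀ f ∈ A, phi f ∈ B) (hBA : ∀ f ∈ B, phi f ∈ A) : cs A ⊆ cs B := by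
  rintro s ⟨⟨f, hfA, hf0, hsupp⟩, hmin⟩
  have hphif0 : phi f ≠ 0 := fun h => hf0 (by rw [← phi_phi f, h, map_zero])
  refine ⟨⟨phi f, hAB f hfA, hphif0, by rw [support_phi, hsupp]⟩, ?_⟩
  intro g hgB hg0 hgs
  have hphig0 : phi g ≠ 0 := fun h => hg0 (by rw [← phi_phi g, h, map_zero])
  have := hmin (phi g) (hBA g hgB) hphig0 (by rw [support_phi]; exact hgs)
  rwa [support_phi] at this

section Homog
attribute [local instance] MvPolynomial.gradedAlgebra

lemma homogP : Ideal.IsHomogeneous (homogeneousSubmodule (Fin 2) K) (PP (K := K)) := by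
  apply Ideal.homogeneous_span
  rintro x hx
  rcases hx with rfl | rfl
  · exact ⟨1, (mem_homogeneousSubmodule _ _).2 (isHomogeneous_X _ _)⟩
  · exact ⟨1, (mem_homogeneousSubmodule _ _).2 (isHomogeneous_X _ _)⟩

lemma homogIdeal_aux (p : MvPolynomial (Fin 2) K)
    (hp : MvPolynomial.IsHomogeneous p 1) :
    IsHomogIdeal (Ideal.span {p} ⊔ PP ^ 2) := by
  have hsup : Ideal.IsHomogeneous (homogeneousSubmodule (Fin 2) K)
      (Ideal.span {p} ⊔ PP ^ 2) := by
    apply Ideal.IsHomogeneous.sup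
    · exact Ideal.homogeneous_span _ _ (by rintro x rfl; exact ⟨1, (mem_homogeneousSubmodule _ _).2 hp⟩)
    · rw [sq]; exact homogP.mul homogP
  intro f hf d
  have h := hsup d hf
  rwa [show (DirectSum.decompose (homogeneousSubmodule (Fin 2) K) f d : MvPolynomial (Fin 2) K)
      = homogeneousComponent d f from decomposition.decompose'_apply f d] at h

end Homog

def psi : MvPolynomial (Fin 2) K →ₐ[K] DualNumber K :=
  aeval ![DualNumber.eps, DualNumber.eps]

lemma psi_Jm (f : MvPolynomial (Fin 2) K) (hf : f ∈ Jm) : psi f = 0 := by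
  have hker : (Jm : Ideal (MvPolynomial (Fin 2) K)) ≤ RingHom.ker (psi (K := K)) := by
    apply sup_le
    · rw [Ideal.span_le]
      rintro x rfl
      simp [RingHom.mem_ker, psi]
    · rw [sq, Ideal.mul_le]
      intro r hr s hs
      have key : ∀ t ∈ PP (K := K), (DualNumber.eps : DualNumber K) ∣ psi t := by
        intro t ht
        have h1 : psi t ∈ Ideal.map (psi (K := K)) PP := Ideal.mem_map_of_mem _ ht
        rw [Ideal.map_span] at h1
        have him : (psi (K := K)) '' {X 0, X 1} = {DualNumber.eps} := by
          simp [Set.image_insert_eq, psi]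
        rw [him, Ideal.mem_span_singleton] at h1
        exact h1
      obtain ⟨a, ha⟩ := key r hr
      obtain ⟨b, hb⟩ := key s hs
      rw [RingHom.mem_ker, map_mul, ha, hb]
      rw [show (DualNumber.eps * a) * (DualNumber.eps * b)
          = (DualNumber.eps * DualNumber.eps) * (a * b) by ring, DualNumber.eps_mul_eps, zero_mul]
  exact hker hf

lemma Ip_ne_Jm (h2 : (2 : K) ≠ 0) : (Ip : Ideal (MvPolynomial (Fin 2) K)) ≠ Jm := by
  intro h
  have hmem : (X 0 + X 1 : MvPolynomial (Fin 2) K) ∈ Ip :=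
    Ideal.mem_sup_left (Ideal.subset_span rfl)
  rw [h] at hmem
  have h0 := psi_Jm _ hmem
  have : (DualNumber.eps + DualNumber.eps : DualNumber K) = 0 := by
    simpa [psi] using h0
  have hsnd := congrArg TrivSqZeroExt.snd this
  simp [DualNumber.snd_eps] at hsnd
  exact h2 (by rw [← one_add_one_eq_two, hsnd])


end

/-- In `K[X₁,X₂]` with `char K ≠ 2`, the homogeneous ideals
`(X₁+X₂) + (X₁,X₂)²` and `(X₁-X₂) + (X₁,X₂)²` are distinct but have the same circuits set. -/
theorem exists_distinct_ideals_same_cs {K : Type*} [Field K] (h2 : (2 : K) ≠ 0) :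
    IsHomogIdeal (Ideal.span {(X 0 + X 1 : MvPolynomial (Fin 2) K)} ⊔
        (Ideal.span {(X 0 : MvPolynomial (Fin 2) K), X 1}) ^ 2) ∧
    IsHomogIdeal (Ideal.span {(X 0 - X 1 : MvPolynomial (Fin 2) K)} ⊔
        (Ideal.span {(X 0 : MvPolynomial (Fin 2) K), X 1}) ^ 2) ∧
    Ideal.span {(X 0 + X 1 : MvPolynomial (Fin 2) K)} ⊔
        (Ideal.span {(X 0 : MvPolynomial (Fin 2) K), X 1}) ^ 2 ≠
      Ideal.span {(X 0 - X 1 : MvPolynomial (Fin 2) K)} ⊔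
        (Ideal.span {(X 0 : MvPolynomial (Fin 2) K), X 1}) ^ 2 ∧
    cs ((Ideal.span {(X 0 + X 1 : MvPolynomial (Fin 2) K)} ⊔
        (Ideal.span {(X 0 : MvPolynomial (Fin 2) K), X 1}) ^ 2 : Ideal (MvPolynomial (Fin 2) K)) :
          Set (MvPolynomial (Fin 2) K)) =
      cs ((Ideal.span {(X 0 - X 1 : MvPolynomial (Fin 2) K)} ⊔
        (Ideal.span {(X 0 : MvPolynomial (Fin 2) K), X 1}) ^ 2 : Ideal (MvPolynomial (Fin 2) K)) :
          Set (MvPolynomial (Fin 2) K)) := by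
  refine ⟨homogIdeal_aux _ ((isHomogeneous_X K 0).add (isHomogeneous_X K 1)),
    homogIdeal_aux _ ((isHomogeneous_X K 0).sub (isHomogeneous_X K 1)),
    Ip_ne_Jm h2, ?_⟩
  exact Set.Subset.antisymm
    (cs_subset (fun f hf => mem_Ip_phi f hf) (fun f hf => mem_Jm_phi f hf))
    (cs_subset (fun f hf => mem_Jm_phi f hf) (fun f hf => mem_Ip_phi f hf))
end

section
/- Let W be a K-vector subspace of the degree-d component A_d of A = K[X_1,...,X_n]. A finite set S of monomials of degree d is an element of cs(W) if and only if rk_S(W) < |S| and rk_{S'}(W) = |S'| for every nonempty proper subset S' of S, where rk_S(W) := dim_K((W + ⟨S⟩)/W). -/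
open MvPolynomial

/-- The `K`-span of a finite set of monomials. -/
noncomputable def monSpan {K : Type*} [Field K] {n : ℕ} (S : Finset (Fin n →₀ ℕ)) :
    Submodule K (MvPolynomial (Fin n) K) :=
  Submodule.span K ((fun m => (monomial m (1 : K) : MvPolynomial (Fin n) K)) '' S)

/-- `rk_S W = dim_K (W + ⟨S⟩)/W`, the dimension of the image of `⟨S⟩` in `A/W`. -/
noncomputable def rkS {K : Type*} [Field K] {n : ℕ}
    (W : Submodule K (MvPolynomial (Fin n) K)) (S : Finset (Fin n →₀ ℕ)) : ℕ :=
  Module.finrank K ↥(Submodule.map W.mkQ (monSpan S))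

section Aux

variable {K : Type*} [Field K] {n : ℕ}

lemma mem_monSpan {S : Finset (Fin n →₀ ℕ)} {f : MvPolynomial (Fin n) K} :
    f ∈ monSpan S ↔ f.support ⊆ S := by
  constructor
  · intro hf
    induction hf using Submodule.span_induction with
    | mem x hx =>
      obtain ⟨m, hm, rfl⟩ := hx
      classical
      rw [support_monomial]
      simp only [one_ne_zero, if_false]
      exact Finset.singleton_subset_iff.mpr hm
    | zero => simp
    | add x y _ _ hx hy => exact (support_add).trans (Finset.union_subset hx hy)
    | smul c x _ hx => exact (support_smul).trans hx
  · intro hf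
    rw [← f.support_sum_monomial_coeff]
    refine Submodule.sum_mem _ fun m hm => ?_
    have : (monomial m (f.coeff m) : MvPolynomial (Fin n) K)
        = f.coeff m • monomial m 1 := by simp [smul_monomial]
    rw [this]
    exact Submodule.smul_mem _ _ (Submodule.subset_span ⟨m, hf hm, rfl⟩)

lemma finrank_monSpan (S : Finset (Fin n →₀ ℕ)) :
    Module.finrank K (monSpan (K := K) S) = S.card := by
  rw [monSpan, Set.image_eq_range]
  have li : LinearIndependent K (fun m : ↥(↑S : Set (Fin n →₀ ℕ)) =>
      (monomial (m : Fin n →₀ ℕ) (1 : K) : MvPolynomial (Fin n) K)) := by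
    have := (MvPolynomial.basisMonomials (Fin n) K).linearIndependent
    have h2 := this.comp (Subtype.val : ↥(↑S : Set (Fin n →₀ ℕ)) → (Fin n →₀ ℕ))
      Subtype.val_injective
    have he : (fun m : ↥(↑S : Set (Fin n →₀ ℕ)) =>
        (monomial (m : Fin n →₀ ℕ) (1 : K) : MvPolynomial (Fin n) K))
        = ⇑(basisMonomials (Fin n) K) ∘ Subtype.val := by
      funext m
      simp [coe_basisMonomials]
    rw [he]
    exact h2
  rw [finrank_span_eq_card li]
  simp

instance (S : Finset (Fin n →₀ ℕ)) : FiniteDimensional K (monSpan (K := K) S) :=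
  FiniteDimensional.span_of_finite K (S.finite_toSet.image _)

lemma rkS_add (W : Submodule K (MvPolynomial (Fin n) K)) (S : Finset (Fin n →₀ ℕ)) :
    rkS W S + Module.finrank K ↥(Submodule.comap (monSpan S).subtype W) = S.card := by
  have h := LinearMap.finrank_range_add_finrank_ker (W.mkQ.comp (monSpan (K := K) S).subtype)
  rw [LinearMap.range_comp, Submodule.range_subtype, LinearMap.ker_comp, Submodule.ker_mkQ] at h
  rw [rkS, h, finrank_monSpan]

lemma rk_lt_iff (W : Submodule K (MvPolynomial (Fin n) K)) (S : Finset (Fin n →₀ ℕ)) :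
    rkS W S < S.card ↔ ∃ f ∈ W, f ≠ 0 ∧ f.support ⊆ S := by
  have h := rkS_add W S
  constructor
  · intro hlt
    have hpos : 0 < Module.finrank K ↥(Submodule.comap (monSpan (K := K) S).subtype W) := by
      omega
    rw [Module.finrank_pos_iff (R := K)
        (M := ↥(Submodule.comap (monSpan (K := K) S).subtype W))] at hpos
    obtain ⟨⟨⟨f, hfS⟩, hfW⟩, hne⟩ := exists_ne (0 : ↥(Submodule.comap (monSpan (K := K) S).subtype W))
    refine ⟨f, hfW, ?_, mem_monSpan.mp hfS⟩
    intro hf0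
    exact hne (Subtype.ext (Subtype.ext hf0))
  · rintro ⟨f, hfW, hf0, hfS⟩
    have hmem : (⟨f, mem_monSpan.mpr hfS⟩ : ↥(monSpan (K := K) S)) ∈
        Submodule.comap (monSpan (K := K) S).subtype W := hfW
    have hpos : 0 < Module.finrank K ↥(Submodule.comap (monSpan (K := K) S).subtype W) := by
      rw [Module.finrank_pos_iff (R := K)
        (M := ↥(Submodule.comap (monSpan (K := K) S).subtype W))]
      exact ⟨⟨⟨⟨f, mem_monSpan.mpr hfS⟩, hmem⟩, 0, fun hc =>
        hf0 (congrArg Subtype.val (congrArg Subtype.val hc))⟩⟩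
    omega

lemma rk_eq_iff (W : Submodule K (MvPolynomial (Fin n) K)) (S : Finset (Fin n →₀ ℕ)) :
    rkS W S = S.card ↔ ∀ f ∈ W, f.support ⊆ S → f = 0 := by
  have h := rkS_add W S
  have hle : rkS W S ≤ S.card := by omega
  constructor
  · intro heq f hfW hfS
    by_contra hf0
    have := (rk_lt_iff W S).mpr ⟨f, hfW, hf0, hfS⟩
    omega
  · intro hall
    rcases lt_or_eq_of_le hle with hlt | heq
    · obtain ⟨f, hfW, hf0, hfS⟩ := (rk_lt_iff W S).mp hlt
      exact absurd (hall f hfW hfS) hf0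
    · exact heq

end Aux

/-- For a subspace `W ⊆ A_d`, a finite set `S` of degree-`d` monomials is a
circuit of `W` iff `rk_S W < |S|` and `rk_{S'} W = |S'|` for every nonempty proper `S' ⊂ S`. -/
theorem mem_cs_iff_rank {K : Type*} [Field K] {n : ℕ} (d : ℕ)
    (W : Submodule K (MvPolynomial (Fin n) K))
    (hW : W ≤ homogeneousSubmodule (Fin n) K d)
    (S : Finset (Fin n →₀ ℕ)) (hS : ∀ m ∈ S, (m.sum fun _ e => e) = d) :
    S ∈ cs (W : Set (MvPolynomial (Fin n) K)) ↔
      (rkS W S < S.card ∧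
        ∀ S' : Finset (Fin n →₀ ℕ), S' ⊆ S → S' ≠ S → S'.Nonempty → rkS W S' = S'.card) := by
  constructor
  · rintro ⟨⟨f, hfW, hf0, hfsupp⟩, hmin⟩
    refine ⟨(rk_lt_iff W S).mpr ⟨f, hfW, hf0, hfsupp ▸ le_refl _⟩, ?_⟩
    intro S' hsub hne _
    rw [rk_eq_iff]
    intro g hgW hgS'
    by_contra hg0
    have := hmin g hgW hg0 (hgS'.trans hsub)
    exact hne (Finset.Subset.antisymm hsub (this ▸ hgS'))
  · rintro ⟨hlt, hproper⟩
    obtain ⟨f, hfW, hf0, hfS⟩ := (rk_lt_iff W S).mp hlt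
    have key : ∀ g ∈ (W : Set (MvPolynomial (Fin n) K)), g ≠ 0 → g.support ⊆ S →
        g.support = S := by
      intro g hgW hg0 hgS
      by_contra hne
      have hnonempty : g.support.Nonempty := MvPolynomial.support_nonempty.mpr hg0
      have := hproper g.support hgS hne hnonempty
      rw [rk_eq_iff] at this
      exact hg0 (this g hgW (le_refl _))
    exact ⟨⟨f, hfW, hf0, key f hfW hf0 hfS⟩, key⟩
end

section
/- Let I be a homogeneous ideal of A, ≺ a monomial order, and ω, ω' ∈ ℝ^n weights. If in_ω and in_{ω'} agree on all elements of a reduced Gröbner basis of I with respect to ≺_ω (the refinement of ω by ≺), then in_ω(I) = in_{ω'}(I). -/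
open MvPolynomial

/-- The weight of an exponent vector with respect to a weight vector `ω ∈ ℝⁿ`. -/
noncomputable def wt {n : ℕ} (ω : Fin n → ℝ) (m : Fin n →₀ ℕ) : ℝ := ∑ i, ω i * (m i)

open Classical in
/-- The initial form of a polynomial with respect to a weight `ω`: the sum of its
terms of maximal `ω`-weight. -/
noncomputable def iniW {K : Type*} [Field K] {n : ℕ} (ω : Fin n → ℝ)
    (f : MvPolynomial (Fin n) K) : MvPolynomial (Fin n) K :=
  ∑ m ∈ f.support.filter (fun m => ∀ m' ∈ f.support, wt ω m' ≤ wt ω m),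
    monomial m (coeff m f)

/-- The initial ideal of `I` with respect to a weight `ω`. -/
noncomputable def iniIdealW {K : Type*} [Field K] {n : ℕ} (ω : Fin n → ℝ)
    (I : Ideal (MvPolynomial (Fin n) K)) : Ideal (MvPolynomial (Fin n) K) :=
  Ideal.span {p | ∃ f ∈ I, p = iniW ω f}

/-- The refinement `≺_ω` of a weight `ω` by a monomial order `r`. -/
noncomputable def refineW {n : ℕ} (ω : Fin n → ℝ)
    (r : (Fin n →₀ ℕ) → (Fin n →₀ ℕ) → Prop) : (Fin n →₀ ℕ) → (Fin n →₀ ℕ) → Prop :=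
  fun a b => wt ω a < wt ω b ∨ (wt ω a = wt ω b ∧ r a b)








section A
variable {n : ℕ} {r : (Fin n →₀ ℕ) → (Fin n →₀ ℕ) → Prop} {ω : Fin n → ℝ}

lemma wt_add (a b : Fin n →₀ ℕ) : wt ω (a + b) = wt ω a + wt ω b := by
  simp [wt, Finsupp.add_apply, mul_add, Finset.sum_add_distrib]

lemma mo_trich (hr : IsMonomialOrder n r) (a b) : r a b ∨ a = b ∨ r b a := by
  by_cases h1 : r a b
  · exact Or.inl h1
  by_cases h2 : r b a
  · exact Or.inr (Or.inr h2)
  exact Or.inr (Or.inl (hr.1.1 a b h1 h2))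
lemma mo_trans (hr : IsMonomialOrder n r) {a b c} (h1 : r a b) (h2 : r b c) : r a c :=
  hr.2.1.1 a b c h1 h2
lemma mo_irrefl (hr : IsMonomialOrder n r) (a) : ¬ r a a := hr.2.2.1.1 a

lemma refineW_trich (hr : IsMonomialOrder n r) (a b) :
    refineW ω r a b ∨ a = b ∨ refineW ω r b a := by
  rcases lt_trichotomy (wt ω a) (wt ω b) with h | h | h
  · exact Or.inl (Or.inl h)
  · rcases mo_trich hr a b with h' | h' | h'
    · exact Or.inl (Or.inr ⟨h, h'⟩)
    · exact Or.inr (Or.inl h')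
    · exact Or.inr (Or.inr (Or.inr ⟨h.symm, h'⟩))
  · exact Or.inr (Or.inr (Or.inl h))

lemma refineW_trans (hr : IsMonomialOrder n r) {a b c}
    (h1 : refineW ω r a b) (h2 : refineW ω r b c) : refineW ω r a c := by
  rcases h1 with h1 | ⟨h1, h1'⟩ <;> rcases h2 with h2 | ⟨h2, h2'⟩
  · exact Or.inl (h1.trans h2)
  · exact Or.inl (h2 ▸ h1)
  · exact Or.inl (h1 ▸ h2)
  · exact Or.inr ⟨h1.trans h2, mo_trans hr h1' h2'⟩

lemma refineW_irrefl (hr : IsMonomialOrder n r) (a) : ¬ refineW ω r a a := by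
  rintro (h | ⟨-, h⟩)
  · exact lt_irrefl _ h
  · exact mo_irrefl hr a h

lemma refineW_add (hr : IsMonomialOrder n r) {a b} (c) (h : refineW ω r a b) :
    refineW ω r (a + c) (b + c) := by
  rcases h with h | ⟨h, h'⟩
  · exact Or.inl (by rw [wt_add, wt_add]; linarith)
  · exact Or.inr ⟨by rw [wt_add, wt_add, h], hr.2.2.2.1 a b c h'⟩

lemma refineW_wt_le {a b} (h : refineW ω r a b) : wt ω a ≤ wt ω b := by
  rcases h with h | ⟨h, -⟩
  · exact h.le
  · exact h.le

/-- existence of a maximum of a nonempty finset w.r.t. a trichotomous transitive relation -/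
lemma finset_exists_max (t : (Fin n →₀ ℕ) → (Fin n →₀ ℕ) → Prop)
    (htri : ∀ a b, t a b ∨ a = b ∨ t b a)
    (htr : ∀ {a b c}, t a b → t b c → t a c)
    (s : Finset (Fin n →₀ ℕ)) (hs : s.Nonempty) :
    ∃ m ∈ s, ∀ m' ∈ s, m' = m ∨ t m' m := by
  classical
  induction s using Finset.induction_on with
  | empty => exact absurd hs (by simp)
  | @insert a s ha ih =>
    rcases s.eq_empty_or_nonempty with rfl | hs'
    · exact ⟨a, by simp, by simp⟩
    · obtain ⟨m, hm, hmax⟩ := ih hs'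
      rcases htri a m with h | h | h
      · refine ⟨m, by simp [hm], ?_⟩
        intro m' hm'
        rcases Finset.mem_insert.1 hm' with rfl | hm'
        · exact Or.inr h
        · exact hmax m' hm'
      · subst h
        refine ⟨a, by simp, ?_⟩
        intro m' hm'
        rcases Finset.mem_insert.1 hm' with rfl | hm'
        · exact Or.inl rfl
        · exact hmax m' hm'
      · refine ⟨a, by simp, ?_⟩
        intro m' hm'
        rcases Finset.mem_insert.1 hm' with rfl | hm'
        · exact Or.inl rfl
        · rcases hmax m' hm' with rfl | h'
          · exact Or.inr h
          · exact Or.inr (htr h' h)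

end A



section B
variable {K : Type*} [Field K] {n : ℕ} {r : (Fin n →₀ ℕ) → (Fin n →₀ ℕ) → Prop} {ω : Fin n → ℝ}

lemma exists_leadOf (hr : IsMonomialOrder n r) (ω : Fin n → ℝ) {f : MvPolynomial (Fin n) K}
    (hf : f ≠ 0) : ∃ m, leadOf (refineW ω r) f m := by
  obtain ⟨m, hm, hmax⟩ := finset_exists_max (refineW ω r) (refineW_trich hr)
    (refineW_trans hr) f.support (by simpa [Finset.nonempty_iff_ne_empty] using
      (MvPolynomial.support_eq_empty (p := f)).ne.mpr hf)
  exact ⟨m, hm, hmax⟩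

lemma mo_wf (hr : IsMonomialOrder n r) : WellFounded r := by
  haveI : IsTrans _ r := hr.2.1
  haveI : IsIrrefl _ r := hr.2.2.1
  haveI : IsStrictOrder _ r := { }
  rw [RelEmbedding.wellFounded_iff_isEmpty]
  constructor
  intro f
  obtain ⟨i, j, hij, hle⟩ := wellQuasiOrdered_le (α := Fin n →₀ ℕ)
    (fun k => f k)
  have hji : r (f j) (f i) := f.map_rel_iff.2 hij
  rcases eq_or_lt_of_le hle with heq | hlt
  · rw [← heq] at hji
    exact mo_irrefl hr _ hji
  · have hne : f j - f i ≠ 0 := by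
      intro h0
      rw [tsub_eq_zero_iff_le] at h0
      exact hlt.ne (le_antisymm hle h0)
    have : r (f i) (f j) := by
      have := hr.2.2.2.2 (f i) (f j - f i) hne
      rwa [add_tsub_cancel_of_le hle] at this
    exact mo_irrefl hr _ (mo_trans hr this hji)

end B



open Classical in
/-- The part of `f` of `ω`-weight exactly `w`. -/
noncomputable def truncW {K : Type*} [Field K] {n : ℕ} (ω : Fin n → ℝ) (w : ℝ)
    (f : MvPolynomial (Fin n) K) : MvPolynomial (Fin n) K :=
  ∑ m ∈ f.support.filter (fun m => wt ω m = w),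
    monomial m (coeff m f)

section C
variable {K : Type*} [Field K] {n : ℕ} {r : (Fin n →₀ ℕ) → (Fin n →₀ ℕ) → Prop} {ω : Fin n → ℝ}

lemma coeff_iniW (f : MvPolynomial (Fin n) K) (m : Fin n →₀ ℕ) :
    coeff m (iniW ω f) =
      if m ∈ f.support ∧ ∀ m' ∈ f.support, wt ω m' ≤ wt ω m then coeff m f else 0 := by
  classical
  rw [iniW, coeff_sum]
  simp only [coeff_monomial]
  rw [Finset.sum_ite_eq' _ m (fun m' => coeff m' f)]
  simp [Finset.mem_filter]

lemma coeff_truncW (w : ℝ) (f : MvPolynomial (Fin n) K) (m : Fin n →₀ ℕ) :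
    coeff m (truncW ω w f) = if wt ω m = w then coeff m f else 0 := by
  classical
  rw [truncW, coeff_sum]
  simp only [coeff_monomial]
  rw [Finset.sum_ite_eq' _ m (fun m' => coeff m' f)]
  simp only [Finset.mem_filter, MvPolynomial.mem_support_iff]
  by_cases h1 : wt ω m = w <;> by_cases h2 : coeff m f = 0 <;> simp [h1, h2]

@[simp] lemma iniW_zero : iniW ω (0 : MvPolynomial (Fin n) K) = 0 := by
  classical simp [iniW]

lemma support_iniW_subset (f : MvPolynomial (Fin n) K) : (iniW ω f).support ⊆ f.support := by
  intro m hm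
  rw [MvPolynomial.mem_support_iff, coeff_iniW] at hm
  split_ifs at hm with h
  · exact h.1
  · exact absurd rfl hm

lemma mem_support_iniW {f : MvPolynomial (Fin n) K} {m : Fin n →₀ ℕ} :
    m ∈ (iniW ω f).support ↔
      m ∈ f.support ∧ ∀ m' ∈ f.support, wt ω m' ≤ wt ω m := by
  rw [MvPolynomial.mem_support_iff, coeff_iniW]
  constructor
  · intro hm
    split_ifs at hm with h
    · exact h
    · exact absurd rfl hm
  · intro h
    rw [if_pos h]
    exact MvPolynomial.mem_support_iff.1 h.1

lemma coeff_iniW_of_mem_support {f : MvPolynomial (Fin n) K} {m : Fin n →₀ ℕ}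
    (hm : m ∈ (iniW ω f).support) : coeff m (iniW ω f) = coeff m f := by
  rw [coeff_iniW, if_pos (mem_support_iniW.1 hm)]

lemma hub_of_leadOf {f : MvPolynomial (Fin n) K} {m₀ : Fin n →₀ ℕ}
    (h : leadOf (refineW ω r) f m₀) : ∀ m' ∈ f.support, wt ω m' ≤ wt ω m₀ := by
  intro m' hm'
  rcases h.2 m' hm' with rfl | ht
  · exact le_refl _
  · exact refineW_wt_le ht

lemma iniW_eq_truncW' {f : MvPolynomial (Fin n) K} {m₀ : Fin n →₀ ℕ}
    (hm₀ : m₀ ∈ f.support) (hub : ∀ m' ∈ f.support, wt ω m' ≤ wt ω m₀) :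
    iniW ω f = truncW ω (wt ω m₀) f := by
  ext m
  rw [coeff_iniW, coeff_truncW]
  by_cases hm : m ∈ f.support
  · have : (∀ m' ∈ f.support, wt ω m' ≤ wt ω m) ↔ wt ω m = wt ω m₀ :=
      ⟨fun h => le_antisymm (hub m hm) (h m₀ hm₀),
       fun h m' hm' => h ▸ hub m' hm'⟩
    by_cases hcond : wt ω m = wt ω m₀
    · rw [if_pos ⟨hm, this.mpr hcond⟩, if_pos hcond]
    · rw [if_neg (fun hc => hcond (this.mp hc.2)), if_neg hcond]
  · rw [MvPolynomial.notMem_support_iff] at hm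
    simp [hm]

lemma iniW_ne_zero (hr : IsMonomialOrder n r) (ω : Fin n → ℝ) {f : MvPolynomial (Fin n) K}
    (hf : f ≠ 0) : iniW ω f ≠ 0 := by
  obtain ⟨m₀, hlead⟩ := exists_leadOf hr ω hf
  intro h0
  have : m₀ ∈ (iniW ω f).support := mem_support_iniW.2 ⟨hlead.1, hub_of_leadOf hlead⟩
  rw [h0] at this
  simp at this

lemma leadOf_iniW {f : MvPolynomial (Fin n) K} {m₀ : Fin n →₀ ℕ}
    (h : leadOf (refineW ω r) f m₀) : leadOf (refineW ω r) (iniW ω f) m₀ :=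
  ⟨mem_support_iniW.2 ⟨h.1, hub_of_leadOf h⟩,
   fun m' hm' => h.2 m' (support_iniW_subset f hm')⟩

lemma wt_support_iniW {f : MvPolynomial (Fin n) K} {m₁ m₂ : Fin n →₀ ℕ}
    (h1 : m₁ ∈ (iniW ω f).support) (h2 : m₂ ∈ (iniW ω f).support) :
    wt ω m₁ = wt ω m₂ := by
  rw [mem_support_iniW] at h1 h2
  exact le_antisymm (h2.2 m₁ h1.1) (h1.2 m₂ h2.1)

lemma truncW_add (w : ℝ) (f g : MvPolynomial (Fin n) K) :
    truncW ω w (f + g) = truncW ω w f + truncW ω w g := by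
  ext m
  simp only [coeff_truncW, MvPolynomial.coeff_add]
  split_ifs <;> simp

lemma truncW_smul (w : ℝ) (c : K) (f : MvPolynomial (Fin n) K) :
    truncW ω w (c • f) = c • truncW ω w f := by
  ext m
  simp only [coeff_truncW, MvPolynomial.coeff_smul, smul_eq_mul]
  split_ifs <;> simp

@[simp] lemma truncW_zero (w : ℝ) : truncW ω w (0 : MvPolynomial (Fin n) K) = 0 := by
  classical simp [truncW]

lemma truncW_sum (w : ℝ) {α : Type*} (s : Finset α) (F : α → MvPolynomial (Fin n) K) :
    truncW ω w (∑ i ∈ s, F i) = ∑ i ∈ s, truncW ω w (F i) := by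
  classical
  induction s using Finset.induction_on with
  | empty => simp
  | @insert a s ha ih => rw [Finset.sum_insert ha, truncW_add, ih, Finset.sum_insert ha]

lemma truncW_eq_zero (w : ℝ) {f : MvPolynomial (Fin n) K}
    (h : ∀ m ∈ f.support, wt ω m ≠ w) : truncW ω w f = 0 := by
  ext m
  rw [coeff_truncW]
  split_ifs with hw
  · by_cases hm : m ∈ f.support
    · exact absurd hw (h m hm)
    · simpa using MvPolynomial.notMem_support_iff.1 hm
  · simp

lemma truncW_eq_self (w : ℝ) {f : MvPolynomial (Fin n) K}
    (h : ∀ m ∈ f.support, wt ω m = w) : truncW ω w f = f := by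
  ext m
  rw [coeff_truncW]
  split_ifs with hw
  · rfl
  · by_cases hm : m ∈ f.support
    · exact absurd (h m hm) hw
    · simpa using (MvPolynomial.notMem_support_iff.1 hm).symm

end C

section D
variable {K : Type*} [Field K] {n : ℕ} {ω : Fin n → ℝ}

lemma mem_support_monomial_mul {b : Fin n →₀ ℕ} {c : K} (hc : c ≠ 0)
    {f : MvPolynomial (Fin n) K} {m : Fin n →₀ ℕ} :
    m ∈ (monomial b c * f).support ↔ b ≤ m ∧ (m - b) ∈ f.support := by
  rw [MvPolynomial.mem_support_iff, coeff_monomial_mul' m b c f, MvPolynomial.mem_support_iff]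
  split_ifs with hb
  · simp [hb, hc]
  · simp [hb]

lemma iniW_monomial_mul (b : Fin n →₀ ℕ) (c : K) (f : MvPolynomial (Fin n) K) :
    iniW ω (monomial b c * f) = monomial b c * iniW ω f := by
  by_cases hc : c = 0
  · simp [hc]
  ext m
  rw [coeff_iniW]
  by_cases hb : b ≤ m
  · have hmb : b + (m - b) = m := add_tsub_cancel_of_le hb
    rw [coeff_monomial_mul' m b c (iniW ω f), if_pos hb, coeff_iniW,
      coeff_monomial_mul' m b c f, if_pos hb]
    by_cases h2 : (m - b) ∈ f.support ∧ ∀ μ' ∈ f.support, wt ω μ' ≤ wt ω (m - b)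
    · rw [if_pos h2, if_pos]
      refine ⟨mem_support_monomial_mul hc |>.2 ⟨hb, h2.1⟩, ?_⟩
      intro μ hμ
      obtain ⟨hbμ, hμ'⟩ := (mem_support_monomial_mul hc).1 hμ
      have e1 : wt ω μ = wt ω b + wt ω (μ - b) := by
        rw [← wt_add, add_tsub_cancel_of_le hbμ]
      have e2 : wt ω m = wt ω b + wt ω (m - b) := by
        rw [← wt_add, hmb]
      rw [e1, e2]
      exact add_le_add le_rfl (h2.2 _ hμ')
    · rw [if_neg h2, if_neg, mul_zero]
      rintro ⟨hmem, hmax⟩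
      obtain ⟨-, hmf⟩ := (mem_support_monomial_mul hc).1 hmem
      refine h2 ⟨hmf, ?_⟩
      intro μ' hμ'
      have hμP : b + μ' ∈ (monomial b c * f).support :=
        (mem_support_monomial_mul hc).2 ⟨le_add_right le_rfl, by rwa [add_tsub_cancel_left]⟩
      have := hmax _ hμP
      have e1 : wt ω (b + μ') = wt ω b + wt ω μ' := wt_add _ _
      have e2 : wt ω m = wt ω b + wt ω (m - b) := by
        rw [← wt_add, hmb]
      rw [e1, e2] at this
      linarith
  · rw [coeff_monomial_mul' m b c (iniW ω f), if_neg hb, if_neg]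
    rintro ⟨hmem, -⟩
    exact hb ((mem_support_monomial_mul hc).1 hmem).1

end D









section E
variable {K : Type*} [Field K] {n : ℕ} {r : (Fin n →₀ ℕ) → (Fin n →₀ ℕ) → Prop} {ω : Fin n → ℝ}

lemma support_dvd_of_mem_monomial_span {G : Finset (MvPolynomial (Fin n) K)}
    {t : (Fin n →₀ ℕ) → (Fin n →₀ ℕ) → Prop} {q : MvPolynomial (Fin n) K}
    (hq : q ∈ Ideal.span {p | ∃ f ∈ G, ∃ m, leadOf t f m ∧ p = monomial m (1 : K)}) :
    ∀ m ∈ q.support, ∃ g ∈ G, ∃ mg, leadOf t g mg ∧ mg ≤ m := by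
  classical
  refine Submodule.span_induction ?_ ?_ ?_ ?_ hq
  · rintro p ⟨g, hg, mg, hlead, rfl⟩ m hm
    rw [MvPolynomial.support_monomial] at hm
    simp only [one_ne_zero, if_false, Finset.mem_singleton] at hm
    subst hm
    exact ⟨g, hg, m, hlead, le_rfl⟩
  · simp
  · intro x y hx hy ihx ihy m hm
    rcases Finset.mem_union.1 (MvPolynomial.support_add hm) with h | h
    · exact ihx m h
    · exact ihy m h
  · intro a x hx ih m hm
    rw [smul_eq_mul] at hm
    have := MvPolynomial.support_mul a x hm
    rw [Finset.mem_add] at this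
    obtain ⟨u, hu, v, hv, rfl⟩ := this
    obtain ⟨g, hg, mg, hlead, hle⟩ := ih v hv
    exact ⟨g, hg, mg, hlead, hle.trans le_add_self⟩

lemma step1 (hr : IsMonomialOrder n r) (ω : Fin n → ℝ) (I : Ideal (MvPolynomial (Fin n) K))
    (G : Finset (MvPolynomial (Fin n) K)) (hG : IsRGB (refineW ω r) I G) :
    ∀ f ∈ I, iniW ω f ∈ Ideal.span (iniW ω '' (G : Set (MvPolynomial (Fin n) K))) := by
  classical
  have main : ∀ m₀ : Fin n →₀ ℕ, ∀ f, f ∈ I → f ≠ 0 → leadOf (refineW ω r) f m₀ →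
      iniW ω f ∈ Ideal.span (iniW ω '' (G : Set (MvPolynomial (Fin n) K))) := by
    intro m₀
    refine (mo_wf hr).induction
      (C := fun m₀ => ∀ f, f ∈ I → f ≠ 0 → leadOf (refineW ω r) f m₀ →
        iniW ω f ∈ Ideal.span (iniW ω '' (G : Set (MvPolynomial (Fin n) K)))) m₀ ?_
    clear m₀
    intro m₀ IH f hfI hf0 hlead
    have hmono : monomial m₀ (1 : K) ∈ iniIdeal (refineW ω r) I :=
      Ideal.subset_span ⟨f, hfI, hf0, m₀, hlead, rfl⟩
    rw [hG.1.2.2] at hmono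
    have hm₀supp : m₀ ∈ (monomial m₀ (1 : K)).support := by
      rw [MvPolynomial.support_monomial]
      simp
    obtain ⟨g, hgG, mg, hgl, hdvd⟩ := support_dvd_of_mem_monomial_span hmono m₀ hm₀supp
    have hgI : g ∈ I := hG.1.1 hgG
    have hmonic : coeff mg g = 1 := hG.2.1 g hgG mg hgl
    set b := m₀ - mg with hbdef
    have hbm : b + mg = m₀ := by rw [hbdef, tsub_add_cancel_of_le hdvd]
    set c := coeff m₀ f with hcdef
    have hc0 : c ≠ 0 := MvPolynomial.mem_support_iff.1 hlead.1
    set P := monomial b c * g with hPdef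
    have hPI : P ∈ I := Ideal.mul_mem_left _ _ hgI
    have hcP : coeff m₀ P = c := by
      rw [hPdef, ← hbm, MvPolynomial.coeff_monomial_mul, hmonic, mul_one]
    have hPlead : ∀ m ∈ P.support, m = m₀ ∨ refineW ω r m m₀ := by
      intro m hm
      obtain ⟨hbm', hmf⟩ := (mem_support_monomial_mul hc0).1 hm
      have hmeq : b + (m - b) = m := add_tsub_cancel_of_le hbm'
      rcases hgl.2 _ hmf with heq | ht
      · left; rw [← hmeq, heq, hbm]
      · right
        have := refineW_add hr b ht
        rwa [add_comm _ b, add_comm _ b, hmeq, hbm] at this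
    have hsuppP : m₀ ∈ P.support := MvPolynomial.mem_support_iff.2 (by rw [hcP]; exact hc0)
    set f' := f - P with hf'def
    have hf'I : f' ∈ I := I.sub_mem hfI hPI
    have hcf' : coeff m₀ f' = 0 := by
      rw [hf'def, MvPolynomial.coeff_sub, hcP, ← hcdef, sub_self]
    have hf'supp : ∀ m ∈ f'.support, refineW ω r m m₀ := by
      intro m hm
      have hmne : m ≠ m₀ := fun h => (MvPolynomial.mem_support_iff.1 hm) (h ▸ hcf')
      rcases Finset.mem_union.1 (MvPolynomial.support_sub (Fin n) f P hm) with h | h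
      · rcases hlead.2 m h with heq | ht
        · exact absurd heq hmne
        · exact ht
      · rcases hPlead m h with heq | ht
        · exact absurd heq hmne
        · exact ht
    have hubf : ∀ m ∈ f.support, wt ω m ≤ wt ω m₀ := hub_of_leadOf hlead
    have hubP : ∀ m ∈ P.support, wt ω m ≤ wt ω m₀ := by
      intro m hm
      rcases hPlead m hm with heq | ht
      · rw [heq]
      · exact refineW_wt_le ht
    have htP : truncW ω (wt ω m₀) P = monomial b c * iniW ω g := by
      rw [← iniW_eq_truncW' hsuppP hubP, hPdef, iniW_monomial_mul]
    have hPJ : monomial b c * iniW ω g ∈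
        Ideal.span (iniW ω '' (G : Set (MvPolynomial (Fin n) K))) :=
      Ideal.mul_mem_left _ _ (Ideal.subset_span ⟨g, hgG, rfl⟩)
    have hsplit : iniW ω f = truncW ω (wt ω m₀) f' + monomial b c * iniW ω g := by
      rw [iniW_eq_truncW' hlead.1 hubf, ← htP, ← truncW_add]
      congr 1
      rw [hf'def]
      ring
    by_cases hf'0 : f' = 0
    · rw [hsplit, hf'0, truncW_zero, zero_add]
      exact hPJ
    · obtain ⟨m₁, hlead'⟩ := exists_leadOf hr ω hf'0
      have hm₁ : refineW ω r m₁ m₀ := hf'supp m₁ hlead'.1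
      by_cases hw : wt ω m₁ = wt ω m₀
      · have hr₁ : r m₁ m₀ := by
          rcases hm₁ with hlt | ⟨-, hr₁⟩
          · exact absurd hw (ne_of_lt hlt)
          · exact hr₁
        have ihf' := IH m₁ hr₁ f' hf'I hf'0 hlead'
        have htf' : truncW ω (wt ω m₀) f' = iniW ω f' := by
          have := iniW_eq_truncW' hlead'.1 (hub_of_leadOf hlead')
          rw [hw] at this
          exact this.symm
        rw [hsplit, htf']
        exact Ideal.add_mem _ ihf' hPJ
      · have h0 : truncW ω (wt ω m₀) f' = 0 := by
          refine truncW_eq_zero _ fun m hm => ?_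
          have h1 : wt ω m ≤ wt ω m₁ := hub_of_leadOf hlead' m hm
          have h2 : wt ω m₁ ≤ wt ω m₀ := refineW_wt_le hm₁
          intro h3
          exact hw (le_antisymm h2 (h3 ▸ h1))
        rw [hsplit, h0, zero_add]
        exact hPJ
  intro f hf
  by_cases hf0 : f = 0
  · simp [hf0]
  · obtain ⟨m₀, hlead⟩ := exists_leadOf hr ω hf0
    exact main m₀ f hf hf0 hlead

end E



section F
variable {K : Type*} [Field K] {n : ℕ} {ω : Fin n → ℝ}

/-- The degree-`d` homogeneous part of the ideal `I`, as a `K`-submodule. -/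
noncomputable def Ud (I : Ideal (MvPolynomial (Fin n) K)) (d : ℕ) :
    Submodule K (MvPolynomial (Fin n) K) :=
  Submodule.restrictScalars K I ⊓ homogeneousSubmodule (Fin n) K d

/-- The `K`-span of initial forms of homogeneous degree-`d` elements of `I`. -/
noncomputable def Vsub (ω : Fin n → ℝ) (I : Ideal (MvPolynomial (Fin n) K)) (d : ℕ) :
    Submodule K (MvPolynomial (Fin n) K) :=
  Submodule.span K (iniW ω '' (Ud I d : Set (MvPolynomial (Fin n) K)))

/-- Generating set for the initial ideal: monomial multiples of initial forms of
homogeneous elements. -/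
def TSet (ω : Fin n → ℝ) (I : Ideal (MvPolynomial (Fin n) K)) :
    Set (MvPolynomial (Fin n) K) :=
  {p | ∃ (b : Fin n →₀ ℕ) (h : MvPolynomial (Fin n) K),
    (h ∈ I ∧ ∃ e, h.IsHomogeneous e) ∧ p = monomial b (1 : K) * iniW ω h}

lemma mem_Ud {I : Ideal (MvPolynomial (Fin n) K)} {d : ℕ} {h : MvPolynomial (Fin n) K} :
    h ∈ Ud I d ↔ h ∈ I ∧ h.IsHomogeneous d := by
  simp [Ud, mem_homogeneousSubmodule]

lemma isHomogeneous_iniW {f : MvPolynomial (Fin n) K} {d : ℕ}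
    (hf : f.IsHomogeneous d) : (iniW ω f).IsHomogeneous d := by
  intro m hm
  apply hf
  rw [coeff_iniW] at hm
  split_ifs at hm with h
  · exact hm
  · exact absurd rfl hm

lemma iniW_mem_span_homog {I : Ideal (MvPolynomial (Fin n) K)} (hI : IsHomogIdeal I)
    {f : MvPolynomial (Fin n) K} (hf : f ∈ I) :
    iniW ω f ∈ Submodule.span K
      (iniW ω '' {h | h ∈ I ∧ ∃ e, h.IsHomogeneous e}) := by
  classical
  by_cases hf0 : f = 0
  · simp [hf0]
  obtain ⟨m₀, hm₀, hub⟩ := f.support.exists_max_image (wt ω)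
    (by simpa [Finset.nonempty_iff_ne_empty] using
      (MvPolynomial.support_eq_empty (p := f)).ne.mpr hf0)
  have hm₀ini : m₀ ∈ (iniW ω f).support := mem_support_iniW.2 ⟨hm₀, hub⟩
  set D := (iniW ω f).support.image Finsupp.degree with hD
  have key : iniW ω f = ∑ d ∈ D, iniW ω (homogeneousComponent d f) := by
    have hDsub : D ⊆ Finset.range (f.totalDegree + 1) := by
      intro d hd
      obtain ⟨m₁, hm₁, rfl⟩ := Finset.mem_image.1 hd
      have : m₁ ∈ f.support := support_iniW_subset f hm₁
      rw [Finset.mem_range, Nat.lt_succ_iff]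
      exact le_trans (le_of_eq (by simp [Finsupp.degree, Finsupp.sum]; rfl)) (le_totalDegree this)
    have hzero : ∀ d ∈ Finset.range (f.totalDegree + 1), d ∉ D →
        truncW ω (wt ω m₀) (homogeneousComponent d f) = 0 := by
      intro d _ hdD
      refine truncW_eq_zero _ fun m hm hwm => ?_
      rw [MvPolynomial.mem_support_iff, coeff_homogeneousComponent] at hm
      split_ifs at hm with hdeg
      · have hmf : m ∈ f.support := MvPolynomial.mem_support_iff.2 hm
        have : m ∈ (iniW ω f).support := mem_support_iniW.2
          ⟨hmf, fun m' hm' => hwm ▸ hub m' hm'⟩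
        exact hdD (Finset.mem_image.2 ⟨m, this, hdeg⟩)
      · exact hm rfl
    have hperd : ∀ d ∈ D,
        truncW ω (wt ω m₀) (homogeneousComponent d f) = iniW ω (homogeneousComponent d f) := by
      intro d hd
      obtain ⟨m₁, hm₁, hdeg⟩ := Finset.mem_image.1 hd
      have hwt1 : wt ω m₁ = wt ω m₀ := wt_support_iniW hm₁ hm₀ini
      have hm₁f : m₁ ∈ f.support := support_iniW_subset f hm₁
      have hm₁hc : m₁ ∈ (homogeneousComponent d f).support := by
        rw [MvPolynomial.mem_support_iff, coeff_homogeneousComponent, if_pos hdeg]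
        exact MvPolynomial.mem_support_iff.1 hm₁f
      have hubhc : ∀ m ∈ (homogeneousComponent d f).support, wt ω m ≤ wt ω m₁ := by
        intro m hm
        rw [MvPolynomial.mem_support_iff, coeff_homogeneousComponent] at hm
        split_ifs at hm with hdeg'
        · exact hwt1 ▸ hub m (MvPolynomial.mem_support_iff.2 hm)
        · exact absurd rfl hm
      have heq := iniW_eq_truncW' hm₁hc hubhc
      rw [hwt1] at heq
      exact heq.symm
    calc iniW ω f = truncW ω (wt ω m₀) f := iniW_eq_truncW' hm₀ hub
      _ = truncW ω (wt ω m₀)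
            (∑ i ∈ Finset.range (f.totalDegree + 1), homogeneousComponent i f) := by
          rw [sum_homogeneousComponent]
      _ = ∑ i ∈ Finset.range (f.totalDegree + 1),
            truncW ω (wt ω m₀) (homogeneousComponent i f) := truncW_sum _ _ _
      _ = ∑ d ∈ D, truncW ω (wt ω m₀) (homogeneousComponent d f) :=
          (Finset.sum_subset hDsub hzero).symm
      _ = ∑ d ∈ D, iniW ω (homogeneousComponent d f) := Finset.sum_congr rfl hperd
  rw [key]
  refine Submodule.sum_mem _ fun d _ => Submodule.subset_span ?_
  exact Set.mem_image_of_mem _ ⟨hI f hf d, d, homogeneousComponent_isHomogeneous d f⟩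

end F

section G
variable {K : Type*} [Field K] {n : ℕ} {ω : Fin n → ℝ}

lemma monomial_mul_mem_spanT {I : Ideal (MvPolynomial (Fin n) K)}
    {x : MvPolynomial (Fin n) K} (hx : x ∈ Submodule.span K (TSet ω I))
    (b : Fin n →₀ ℕ) (c : K) : monomial b c * x ∈ Submodule.span K (TSet ω I) := by
  refine Submodule.span_induction ?_ ?_ ?_ ?_ hx
  · rintro p ⟨b', h, hh, rfl⟩
    have heq : monomial b c * (monomial b' (1 : K) * iniW ω h)
        = c • (monomial (b + b') (1 : K) * iniW ω h) := by
      rw [← mul_assoc, MvPolynomial.monomial_mul, mul_one, ← smul_mul_assoc]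
      congr 1
      rw [smul_monomial, smul_eq_mul, mul_one]
    rw [heq]
    exact Submodule.smul_mem _ _ (Submodule.subset_span ⟨b + b', h, hh, rfl⟩)
  · rw [mul_zero]; exact Submodule.zero_mem _
  · intro y z _ _ hy hz
    rw [mul_add]
    exact Submodule.add_mem _ hy hz
  · intro a y _ hy
    rw [mul_smul_comm]
    exact Submodule.smul_mem _ _ hy

lemma mul_mem_spanT {I : Ideal (MvPolynomial (Fin n) K)}
    {x : MvPolynomial (Fin n) K} (hx : x ∈ Submodule.span K (TSet ω I))
    (q : MvPolynomial (Fin n) K) : q * x ∈ Submodule.span K (TSet ω I) := by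
  rw [q.as_sum, Finset.sum_mul]
  exact Submodule.sum_mem _ fun m _ => monomial_mul_mem_spanT hx m _

lemma iniIdealW_eq_spanT {I : Ideal (MvPolynomial (Fin n) K)} (hI : IsHomogIdeal I)
    (x : MvPolynomial (Fin n) K) :
    x ∈ iniIdealW ω I ↔ x ∈ Submodule.span K (TSet ω I) := by
  constructor
  · intro hx
    refine Submodule.span_induction ?_ ?_ ?_ ?_ hx
    · rintro p ⟨f, hf, rfl⟩
      refine Submodule.span_le.2 ?_ (iniW_mem_span_homog hI hf)
      rintro p ⟨h, hh, rfl⟩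
      exact Submodule.subset_span ⟨0, h, hh, by simp [MvPolynomial.monomial_zero']⟩
    · exact Submodule.zero_mem _
    · intro y z _ _ hy hz
      exact Submodule.add_mem _ hy hz
    · intro a y _ hy
      rw [smul_eq_mul]
      exact mul_mem_spanT hy a
  · intro hx
    refine Submodule.span_induction ?_ ?_ ?_ ?_ hx
    · rintro p ⟨b, h, ⟨hhI, -⟩, rfl⟩
      exact Ideal.mul_mem_left _ _ (Ideal.subset_span ⟨h, hhI, rfl⟩)
    · exact Ideal.zero_mem _
    · intro y z _ _ hy hz
      exact Ideal.add_mem _ hy hz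
    · intro a y _ hy
      rw [smul_eq_C_mul]
      exact Ideal.mul_mem_left _ _ hy

lemma spanT_component {I : Ideal (MvPolynomial (Fin n) K)}
    {x : MvPolynomial (Fin n) K} (hx : x ∈ Submodule.span K (TSet ω I)) (d : ℕ) :
    homogeneousComponent d x ∈ Vsub ω I d := by
  revert d
  refine Submodule.span_induction (p := fun x _ => ∀ d, homogeneousComponent d x ∈ Vsub ω I d)
    ?_ ?_ ?_ ?_ hx
  · rintro p ⟨b, h, ⟨hhI, e, he⟩, rfl⟩ d
    have hP : monomial b (1 : K) * iniW ω h = iniW ω (monomial b (1 : K) * h) :=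
      (iniW_monomial_mul _ _ _).symm
    have hmh : (monomial b (1 : K) * h).IsHomogeneous (b.degree + e) :=
      (isHomogeneous_monomial (1 : K) rfl).mul he
    have hph : (monomial b (1 : K) * iniW ω h).IsHomogeneous (b.degree + e) :=
      hP ▸ isHomogeneous_iniW hmh
    rw [homogeneousComponent_of_mem ((mem_homogeneousSubmodule _ _).2 hph)]
    split_ifs with hd
    · subst hd
      refine Submodule.subset_span ⟨monomial b (1 : K) * h, ?_, hP.symm ▸ rfl⟩
      exact mem_Ud.2 ⟨Ideal.mul_mem_left _ _ hhI, hmh⟩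
    · exact Submodule.zero_mem _
  · intro d
    rw [map_zero]
    exact Submodule.zero_mem _
  · intro y z _ _ hy hz d
    rw [map_add]
    exact Submodule.add_mem _ (hy d) (hz d)
  · intro a y _ hy d
    rw [map_smul]
    exact Submodule.smul_mem _ _ (hy d)

lemma mem_Vsub_of_homog {I : Ideal (MvPolynomial (Fin n) K)}
    {x : MvPolynomial (Fin n) K} (hx : x ∈ Submodule.span K (TSet ω I)) {d : ℕ}
    (hxd : x.IsHomogeneous d) : x ∈ Vsub ω I d := by
  have := spanT_component hx d
  rwa [homogeneousComponent_of_mem ((mem_homogeneousSubmodule _ _).2 hxd), if_pos rfl]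
    at this

lemma Vsub_le_homog {I : Ideal (MvPolynomial (Fin n) K)} {d : ℕ} :
    Vsub ω I d ≤ homogeneousSubmodule (Fin n) K d := by
  rw [Vsub, Submodule.span_le]
  rintro p ⟨h, hh, rfl⟩
  exact (mem_homogeneousSubmodule _ _).2 (isHomogeneous_iniW (mem_Ud.1 hh).2)

lemma Vsub_le_iniIdealW {I : Ideal (MvPolynomial (Fin n) K)} {d : ℕ} :
    Vsub ω I d ≤ Submodule.restrictScalars K (iniIdealW ω I) := by
  rw [Vsub, Submodule.span_le]
  rintro p ⟨h, hh, rfl⟩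
  exact Ideal.subset_span ⟨h, (mem_Ud.1 hh).1, rfl⟩

end G

section H
variable {K : Type*} [Field K] {n : ℕ} {r : (Fin n →₀ ℕ) → (Fin n →₀ ℕ) → Prop} {ω : Fin n → ℝ}

/-- The set of leading monomials of nonzero elements of a set of polynomials. -/
def leadsSet (t : (Fin n →₀ ℕ) → (Fin n →₀ ℕ) → Prop) (U : Set (MvPolynomial (Fin n) K)) :
    Set (Fin n →₀ ℕ) :=
  {m | ∃ u ∈ U, u ≠ 0 ∧ leadOf t u m}

lemma leads_span_iniW (hr : IsMonomialOrder n r) (ω : Fin n → ℝ)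
    (U : Submodule K (MvPolynomial (Fin n) K)) :
    leadsSet (refineW ω r)
      ((Submodule.span K (iniW ω '' (U : Set (MvPolynomial (Fin n) K))) :
        Submodule K (MvPolynomial (Fin n) K)) : Set (MvPolynomial (Fin n) K))
      = leadsSet (refineW ω r) (U : Set (MvPolynomial (Fin n) K)) := by
  classical
  ext m
  constructor
  · rintro ⟨v, hv, hv0, hlead⟩
    obtain ⟨k, c, gs, hsum⟩ := Submodule.mem_span_set'.1 hv
    have hex : ∀ i : Fin k, ∃ h, h ∈ U ∧ iniW ω h = (gs i : MvPolynomial (Fin n) K) := by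
      intro i
      obtain ⟨h, hh, heq⟩ := (gs i).2
      exact ⟨h, hh, heq⟩
    choose hfun hmem hini using hex
    have hv' : v = ∑ i, c i • iniW ω (hfun i) := by
      rw [← hsum]
      exact (Finset.sum_congr rfl fun i _ => by rw [hini i]).symm
    set w := wt ω m with hw
    set T := Finset.univ.filter
      (fun i : Fin k => truncW ω w (iniW ω (hfun i)) = iniW ω (hfun i) ∧ hfun i ≠ 0) with hT
    -- for i ∈ T, all support weights of hfun i are ≤ w, and truncW w extracts iniW
    have hdT : ∀ i ∈ T, (∀ m' ∈ (hfun i).support, wt ω m' ≤ w) ∧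
        truncW ω w (hfun i) = iniW ω (hfun i) := by
      intro i hi
      rw [hT, Finset.mem_filter] at hi
      obtain ⟨-, htrunc, hne⟩ := hi
      obtain ⟨mi, hleadi⟩ := exists_leadOf hr ω hne
      have hmi : mi ∈ (iniW ω (hfun i)).support := (leadOf_iniW hleadi).1
      have hwt : wt ω mi = w := by
        by_contra hne'
        have : coeff mi (iniW ω (hfun i)) = 0 := by
          have := congrArg (coeff mi) htrunc
          rw [coeff_truncW, if_neg hne'] at this
          exact this.symm
        exact (MvPolynomial.mem_support_iff.1 hmi) this
      have hub := hub_of_leadOf hleadi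
      refine ⟨fun m' hm' => hwt ▸ hub m' hm', ?_⟩
      have := iniW_eq_truncW' hleadi.1 hub
      rw [hwt] at this
      exact this.symm
    -- zero for i ∉ T
    have hzero : ∀ i : Fin k, i ∉ T → truncW ω w (iniW ω (hfun i)) = 0 := by
      intro i hi
      by_cases hne : hfun i = 0
      · rw [hne, iniW_zero, truncW_zero]
      · have hini0 : iniW ω (hfun i) ≠ 0 := iniW_ne_zero hr ω hne
        obtain ⟨μ, hμ⟩ := (MvPolynomial.support_eq_empty (p := iniW ω (hfun i))).ne.mpr hini0
          |> fun h => Finset.nonempty_iff_ne_empty.2 h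
        by_cases hwμ : wt ω μ = w
        · exfalso
          apply hi
          rw [hT, Finset.mem_filter]
          refine ⟨Finset.mem_univ _, ?_, hne⟩
          exact truncW_eq_self _ fun m' hm' => (wt_support_iniW hm' hμ).trans hwμ
        · refine truncW_eq_zero _ fun m' hm' hm'w => ?_
          exact hwμ ((wt_support_iniW hμ hm').trans hm'w)
    -- the truncated combination
    have hcv : truncW ω w v = ∑ i ∈ T, c i • iniW ω (hfun i) := by
      rw [hv', truncW_sum]
      rw [← Finset.sum_subset (Finset.subset_univ T) (fun i _ hiT => by
        rw [truncW_smul, hzero i hiT, smul_zero])]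
      refine Finset.sum_congr rfl fun i hi => ?_
      rw [truncW_smul]
      congr 1
      rw [hT, Finset.mem_filter] at hi
      exact hi.2.1
    set h := ∑ i ∈ T, c i • hfun i with hh
    have hhU : h ∈ U := Submodule.sum_mem _ fun i _ => Submodule.smul_mem _ _ (hmem i)
    have hch : truncW ω w h = truncW ω w v := by
      rw [hh, truncW_sum, hcv]
      refine Finset.sum_congr rfl fun i hi => ?_
      rw [truncW_smul, (hdT i hi).2]
    have hcoeffm : ∀ m', wt ω m' = w → coeff m' h = coeff m' v := by
      intro m' hm'
      have h1 := congrArg (coeff m') hch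
      rwa [coeff_truncW, coeff_truncW, if_pos hm', if_pos hm'] at h1
    have hcm : coeff m h = coeff m v := hcoeffm m rfl
    have hm0 : coeff m v ≠ 0 := MvPolynomial.mem_support_iff.1 hlead.1
    have hh0 : h ≠ 0 := fun h0 => hm0 (by rw [← hcm, h0, MvPolynomial.coeff_zero])
    refine ⟨h, hhU, hh0, MvPolynomial.mem_support_iff.2 (hcm ▸ hm0), ?_⟩
    intro m' hm'
    have hwle : wt ω m' ≤ w := by
      have hc' : coeff m' h ≠ 0 := MvPolynomial.mem_support_iff.1 hm'
      have hexp : coeff m' h = ∑ i ∈ T, c i * coeff m' (hfun i) := by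
        rw [hh, coeff_sum]
        exact Finset.sum_congr rfl fun i _ => MvPolynomial.coeff_smul m' (c i) (hfun i)
      obtain ⟨i, hi, hci⟩ := Finset.exists_ne_zero_of_sum_ne_zero (hexp ▸ hc')
      have : coeff m' (hfun i) ≠ 0 := fun h0 => hci (by rw [h0, mul_zero])
      exact (hdT i hi).1 m' (MvPolynomial.mem_support_iff.2 this)
    rcases lt_or_eq_of_le hwle with hlt | heq
    · exact Or.inr (Or.inl hlt)
    · have hm'v : m' ∈ v.support := by
        rw [MvPolynomial.mem_support_iff, ← hcoeffm m' heq]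
        exact MvPolynomial.mem_support_iff.1 hm'
      exact hlead.2 m' hm'v
  · rintro ⟨u, hu, hu0, hlead⟩
    exact ⟨iniW ω u, Submodule.subset_span (Set.mem_image_of_mem _ hu),
      iniW_ne_zero hr ω hu0, leadOf_iniW hlead⟩

end H

section I
variable {K : Type*} [Field K] {n : ℕ}

open Module

lemma degree_support_of_homog {d : ℕ} {u : MvPolynomial (Fin n) K}
    (hu : u.IsHomogeneous d) {m : Fin n →₀ ℕ} (hm : m ∈ u.support) :
    Finsupp.degree m = d := by
  rw [Finsupp.degree_eq_weight_one]
  exact hu (MvPolynomial.mem_support_iff.1 hm)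

lemma fd_of_le_homog {d : ℕ} (U : Submodule K (MvPolynomial (Fin n) K))
    (hU : U ≤ homogeneousSubmodule (Fin n) K d) : FiniteDimensional K U := by
  classical
  have hfin : ({m : Fin n →₀ ℕ | Finsupp.degree m ≤ d}).Finite := Finsupp.finite_of_degree_le d
  have hle : U ≤ Submodule.span K
      ((fun m => (monomial m (1 : K) : MvPolynomial (Fin n) K)) ''
        {m | Finsupp.degree m ≤ d}) := by
    intro u hu
    have hhom : u.IsHomogeneous d := (mem_homogeneousSubmodule _ _).1 (hU hu)
    rw [MvPolynomial.as_sum u]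
    refine Submodule.sum_mem _ fun m hm => ?_
    have heq : (monomial m (coeff m u) : MvPolynomial (Fin n) K)
        = coeff m u • monomial m (1 : K) := by
      rw [smul_monomial, smul_eq_mul, mul_one]
    rw [heq]
    exact Submodule.smul_mem _ _ (Submodule.subset_span
      ⟨m, le_of_eq (degree_support_of_homog hhom hm), rfl⟩)
  haveI : FiniteDimensional K
      (Submodule.span K ((fun m => (monomial m (1 : K) : MvPolynomial (Fin n) K)) ''
        {m | Finsupp.degree m ≤ d})) :=
    FiniteDimensional.span_of_finite K (hfin.image _)
  exact Submodule.finiteDimensional_of_le hle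

lemma card_leads_le_finrank {t : (Fin n →₀ ℕ) → (Fin n →₀ ℕ) → Prop}
    (htri : ∀ a b, t a b ∨ a = b ∨ t b a)
    (htr : ∀ {a b c}, t a b → t b c → t a c)
    (hirr : ∀ a, ¬ t a a)
    (U : Submodule K (MvPolynomial (Fin n) K)) [FiniteDimensional K U]
    (S : Finset (Fin n →₀ ℕ))
    (hS : ∀ m ∈ S, ∃ u ∈ U, u ≠ 0 ∧ leadOf t u m) :
    S.card ≤ finrank K U := by
  classical
  choose uf hu h0 hl using hS
  have hli : LinearIndependent K (fun m : {m // m ∈ S} => (⟨uf m.1 m.2, hu m.1 m.2⟩ : U)) := by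
    rw [linearIndependent_iff']
    intro s g hsum i hi
    by_contra hgi
    set s' := s.filter (fun j => g j ≠ 0) with hs'
    have hs'ne : s'.Nonempty := ⟨i, Finset.mem_filter.2 ⟨hi, hgi⟩⟩
    obtain ⟨mstar, hmstar, hmaxs⟩ := finset_exists_max t htri htr
      (s'.image Subtype.val) (hs'ne.image Subtype.val)
    obtain ⟨jstar, hjstar, hjval⟩ := Finset.mem_image.1 hmstar
    have hjs : jstar ∈ s := (Finset.mem_filter.1 hjstar).1
    have hgjs : g jstar ≠ 0 := (Finset.mem_filter.1 hjstar).2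
    have hsum' : ∑ j ∈ s, g j • uf j.1 j.2 = 0 := by
      have h1 := congrArg (fun x : U => (x : MvPolynomial (Fin n) K)) hsum
      simpa using h1
    have hcoeff := congrArg (MvPolynomial.coeff mstar) hsum'
    rw [MvPolynomial.coeff_sum, MvPolynomial.coeff_zero] at hcoeff
    rw [Finset.sum_eq_single jstar ?_ (fun h => absurd hjs h)] at hcoeff
    · rw [MvPolynomial.coeff_smul, smul_eq_mul] at hcoeff
      have hclead : coeff mstar (uf jstar.1 jstar.2) ≠ 0 := by
        have := (hl jstar.1 jstar.2).1
        rw [← hjval]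
        exact MvPolynomial.mem_support_iff.1 this
      exact hgjs (by
        rcases mul_eq_zero.1 hcoeff with h | h
        · exact h
        · exact absurd h hclead)
    · intro j hj hjne
      rw [MvPolynomial.coeff_smul, smul_eq_mul]
      by_cases hgj : g j = 0
      · rw [hgj, zero_mul]
      · have hjs' : j ∈ s' := Finset.mem_filter.2 ⟨hj, hgj⟩
        have hcz : coeff mstar (uf j.1 j.2) = 0 := by
          by_contra hcnz
          have hmem : mstar ∈ (uf j.1 j.2).support := MvPolynomial.mem_support_iff.2 hcnz
          rcases (hl j.1 j.2).2 mstar hmem with heq | ht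
          · apply hjne
            apply Subtype.ext
            rw [← heq, ← hjval]
          · rcases hmaxs _ (Finset.mem_image.2 ⟨j, hjs', rfl⟩) with heq' | ht'
            · exact hjne (Subtype.ext (by rw [heq', ← hjval]))
            · exact hirr mstar (htr ht ht')
        rw [hcz, mul_zero]
  have := hli.fintype_card_le_finrank
  rwa [Fintype.card_coe] at this

lemma finrank_le_card_leads {t : (Fin n →₀ ℕ) → (Fin n →₀ ℕ) → Prop}
    (htr : ∀ {a b c}, t a b → t b c → t a c)
    (hirr : ∀ a, ¬ t a a)
    (U : Submodule K (MvPolynomial (Fin n) K))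
    (MF : Finset (Fin n →₀ ℕ)) (hMF : ∀ u ∈ U, u.support ⊆ MF)
    (L : Finset (Fin n →₀ ℕ))
    (hL : ∀ u ∈ U, u ≠ 0 → ∀ m, leadOf t u m → m ∈ L)
    (hL' : ∀ m ∈ L, ∃ u, u ∈ U ∧ u ≠ 0 ∧ leadOf t u m)
    (hex : ∀ u ∈ U, u ≠ 0 → ∃ m, leadOf t u m) :
    finrank K U ≤ L.card := by
  classical
  choose wfn hwU hw0 hwl using hL'
  set F : Finset (MvPolynomial (Fin n) K) := L.attach.image (fun m => wfn m.1 m.2) with hF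
  have hspan : U ≤ Submodule.span K (F : Set (MvPolynomial (Fin n) K)) := by
    have H : ∀ N : ℕ, ∀ u, u ∈ U →
        (∀ m, leadOf t u m → (MF.filter (fun m' => m' = m ∨ t m' m)).card ≤ N) →
        u ∈ Submodule.span K (F : Set (MvPolynomial (Fin n) K)) := by
      intro N
      induction N with
      | zero =>
        intro u huU hcard
        by_cases hu0 : u = 0
        · rw [hu0]; exact Submodule.zero_mem _
        obtain ⟨m, hm⟩ := hex u huU hu0
        exfalso
        have hmMF : m ∈ MF := hMF u huU hm.1
        have hpos : 0 < (MF.filter (fun m' => m' = m ∨ t m' m)).card :=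
          Finset.card_pos.2 ⟨m, Finset.mem_filter.2 ⟨hmMF, Or.inl rfl⟩⟩
        have := hcard m hm
        omega
      | succ N ih =>
        intro u huU hcard
        by_cases hu0 : u = 0
        · rw [hu0]; exact Submodule.zero_mem _
        obtain ⟨m, hm⟩ := hex u huU hu0
        have hmL : m ∈ L := hL u huU hu0 m hm
        set um := wfn m hmL with hum
        have hcm : coeff m um ≠ 0 := MvPolynomial.mem_support_iff.1 (hwl m hmL).1
        set a := coeff m u / coeff m um with ha
        set u' := u - a • um with hu'
        have hu'U : u' ∈ U := U.sub_mem huU (U.smul_mem _ (hwU m hmL))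
        have humF : um ∈ (F : Set (MvPolynomial (Fin n) K)) :=
          Finset.mem_coe.2 (Finset.mem_image.2 ⟨⟨m, hmL⟩, Finset.mem_attach _ _, rfl⟩)
        have hcm' : coeff m u' = 0 := by
          rw [hu', MvPolynomial.coeff_sub, MvPolynomial.coeff_smul, smul_eq_mul, ha,
            div_mul_cancel₀ _ hcm, sub_self]
        have hrec : u' ∈ Submodule.span K (F : Set (MvPolynomial (Fin n) K)) := by
          apply ih u' hu'U
          intro m₁ hm₁
          have hm₁ne : m₁ ≠ m := fun h => (MvPolynomial.mem_support_iff.1 hm₁.1) (h ▸ hcm')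
          have hsupp : u'.support ⊆ u.support ∪ um.support := by
            intro x hx
            rcases Finset.mem_union.1 (MvPolynomial.support_sub (Fin n) u (a • um) hx)
              with h | h
            · exact Finset.mem_union_left _ h
            · exact Finset.mem_union_right _ (MvPolynomial.support_smul h)
          have ht₁ : t m₁ m := by
            rcases Finset.mem_union.1 (hsupp hm₁.1) with h | h
            · rcases hm.2 m₁ h with heq | ht
              · exact absurd heq hm₁ne
              · exact ht
            · rcases (hwl m hmL).2 m₁ h with heq | ht
              · exact absurd heq hm₁ne
              · exact ht
          have hss : (MF.filter (fun m' => m' = m₁ ∨ t m' m₁))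
              ⊂ (MF.filter (fun m' => m' = m ∨ t m' m)) := by
            rw [Finset.ssubset_def]
            constructor
            · intro x hx
              obtain ⟨hxMF, hcase⟩ := Finset.mem_filter.1 hx
              refine Finset.mem_filter.2 ⟨hxMF, Or.inr ?_⟩
              rcases hcase with rfl | ht
              · exact ht₁
              · exact htr ht ht₁
            · intro hsup
              have hmmem : m ∈ MF.filter (fun m' => m' = m ∨ t m' m) :=
                Finset.mem_filter.2 ⟨hMF u huU hm.1, Or.inl rfl⟩
              have := Finset.mem_filter.1 (hsup hmmem)
              rcases this.2 with heq | ht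
              · exact hm₁ne heq.symm
              · exact hirr m (htr ht ht₁)
          have hlt := Finset.card_lt_card hss
          have := hcard m hm
          omega
        have huq : u = u' + a • um := by rw [hu']; ring
        rw [huq]
        exact Submodule.add_mem _ hrec
          (Submodule.smul_mem _ _ (Submodule.subset_span humF))
    intro u huU
    exact H MF.card u huU (fun m _ => Finset.card_filter_le _ _)
  haveI : FiniteDimensional K
      (Submodule.span K (F : Set (MvPolynomial (Fin n) K))) :=
    FiniteDimensional.span_of_finite K F.finite_toSet
  calc finrank K U ≤ finrank K (Submodule.span K (F : Set (MvPolynomial (Fin n) K))) :=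
        Submodule.finrank_mono hspan
    _ ≤ F.card := finrank_span_finset_le_card F
    _ ≤ L.attach.card := Finset.card_image_le
    _ = L.card := Finset.card_attach
end I

section J
variable {K : Type*} [Field K] {n : ℕ} {r : (Fin n →₀ ℕ) → (Fin n →₀ ℕ) → Prop}

open Module

lemma Ud_le_homog {I : Ideal (MvPolynomial (Fin n) K)} {d : ℕ} :
    Ud I d ≤ homogeneousSubmodule (Fin n) K d := inf_le_right

lemma finrank_Vsub_eq (hr : IsMonomialOrder n r) (ω : Fin n → ℝ)
    (I : Ideal (MvPolynomial (Fin n) K)) (d : ℕ) :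
    finrank K (Vsub ω I d) = finrank K (Ud I d) := by
  classical
  haveI hfd1 : FiniteDimensional K (Ud I d) := fd_of_le_homog _ Ud_le_homog
  haveI hfd2 : FiniteDimensional K (Vsub ω I d) := fd_of_le_homog _ Vsub_le_homog
  have hset : leadsSet (refineW ω r) ((Vsub ω I d : Submodule K (MvPolynomial (Fin n) K)) :
      Set (MvPolynomial (Fin n) K)) = leadsSet (refineW ω r)
      ((Ud I d : Submodule K (MvPolynomial (Fin n) K)) :
      Set (MvPolynomial (Fin n) K)) := leads_span_iniW hr ω (Ud I d)
  have htri := refineW_trich (ω := ω) hr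
  have htr : ∀ {a b c}, refineW ω r a b → refineW ω r b c → refineW ω r a c :=
    fun h1 h2 => refineW_trans hr h1 h2
  have hirr := refineW_irrefl (ω := ω) hr
  have hfinL : (leadsSet (refineW ω r) ((Ud I d : Submodule K (MvPolynomial (Fin n) K)) :
      Set (MvPolynomial (Fin n) K))).Finite := by
    refine (Finsupp.finite_of_degree_le d).subset ?_
    rintro m ⟨u, hu, hu0, hl⟩
    exact le_of_eq (degree_support_of_homog
      ((mem_homogeneousSubmodule _ _).1 (Ud_le_homog hu)) hl.1)
  set L : Finset (Fin n →₀ ℕ) := hfinL.toFinset with hL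
  have hmemL : ∀ m, m ∈ L ↔ m ∈ leadsSet (refineW ω r)
      ((Ud I d : Submodule K (MvPolynomial (Fin n) K)) :
      Set (MvPolynomial (Fin n) K)) := fun m => hfinL.mem_toFinset
  set MF : Finset (Fin n →₀ ℕ) := (Finsupp.finite_of_degree_le (σ := Fin n) d).toFinset with hMF
  have hMFsub : ∀ (U : Submodule K (MvPolynomial (Fin n) K)),
      U ≤ homogeneousSubmodule (Fin n) K d → ∀ u ∈ U, u.support ⊆ MF := by
    intro U hle u hu m hm
    rw [hMF, Set.Finite.mem_toFinset]
    exact le_of_eq (degree_support_of_homog ((mem_homogeneousSubmodule _ _).1 (hle hu)) hm)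
  have hex : ∀ (U : Submodule K (MvPolynomial (Fin n) K)), ∀ u ∈ U, u ≠ 0 →
      ∃ m, leadOf (refineW ω r) u m := fun U u _ hu0 => exists_leadOf hr ω hu0
  have hi1 : finrank K (Vsub ω I d) ≤ L.card := by
    refine finrank_le_card_leads (t := refineW ω r) htr hirr (Vsub ω I d) MF
      (hMFsub (Vsub ω I d) Vsub_le_homog) L ?_ ?_ (hex (Vsub ω I d))
    · intro u hu hu0 m hm
      rw [hmemL, ← hset]
      exact ⟨u, hu, hu0, hm⟩
    · intro m hm
      rw [hmemL, ← hset] at hm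
      exact hm
  have hi2 : L.card ≤ finrank K (Vsub ω I d) := by
    refine card_leads_le_finrank (t := refineW ω r) htri htr hirr (Vsub ω I d) L ?_
    intro m hm
    rw [hmemL, ← hset] at hm
    exact hm
  have hi3 : finrank K (Ud I d) ≤ L.card := by
    refine finrank_le_card_leads (t := refineW ω r) htr hirr (Ud I d) MF
      (hMFsub (Ud I d) Ud_le_homog) L ?_ ?_ (hex (Ud I d))
    · intro u hu hu0 m hm
      rw [hmemL]
      exact ⟨u, hu, hu0, hm⟩
    · intro m hm
      rw [hmemL] at hm
      exact hm
  have hi4 : L.card ≤ finrank K (Ud I d) := by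
    refine card_leads_le_finrank (t := refineW ω r) htri htr hirr (Ud I d) L ?_
    intro m hm
    rw [hmemL] at hm
    exact hm
  omega

end J


/-- If the initial forms with respect to `ω` and `ω'` agree on all elements
of a reduced Gröbner basis of `I` with respect to `≺_ω`, then `in_ω(I) = in_{ω'}(I)`. -/
theorem iniIdealW_eq_of_agree_on_RGB {K : Type*} [Field K] {n : ℕ}
    (r : (Fin n →₀ ℕ) → (Fin n →₀ ℕ) → Prop) (hr : IsMonomialOrder n r)
    (ω ω' : Fin n → ℝ) (I : Ideal (MvPolynomial (Fin n) K)) (hI : IsHomogIdeal I)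
    (G : Finset (MvPolynomial (Fin n) K)) (hG : IsRGB (refineW ω r) I G)
    (h : ∀ f ∈ G, iniW ω f = iniW ω' f) :
    iniIdealW ω I = iniIdealW ω' I := by
  classical
  have hGsub : (G : Set (MvPolynomial (Fin n) K)) ⊆ I := hG.1.1
  have himg : iniW ω '' (G : Set (MvPolynomial (Fin n) K))
      = iniW ω' '' (G : Set (MvPolynomial (Fin n) K)) :=
    Set.image_congr (fun g hg => h g hg)
  have hincl : iniIdealW ω I ≤ iniIdealW ω' I := by
    rw [iniIdealW, Ideal.span_le]
    rintro p ⟨f, hf, rfl⟩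
    by_cases hf0 : f = 0
    · rw [hf0, iniW_zero]
      exact (iniIdealW ω' I).zero_mem
    · have hstep := step1 hr ω I G hG f hf
      rw [himg] at hstep
      have hle : Ideal.span (iniW ω' '' (G : Set (MvPolynomial (Fin n) K)))
          ≤ iniIdealW ω' I := by
        rw [Ideal.span_le]
        rintro p ⟨g, hgG, rfl⟩
        exact Ideal.subset_span ⟨g, hGsub hgG, rfl⟩
      exact hle hstep
  have hVle : ∀ d, Vsub ω I d ≤ Vsub ω' I d := by
    intro d x hx
    have hxh : x.IsHomogeneous d := (mem_homogeneousSubmodule _ _).1 (Vsub_le_homog hx)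
    have hx1 : x ∈ iniIdealW ω I := Vsub_le_iniIdealW hx
    exact mem_Vsub_of_homog ((iniIdealW_eq_spanT hI x).1 (hincl hx1)) hxh
  have hVeq : ∀ d, Vsub ω I d = Vsub ω' I d := by
    intro d
    haveI : FiniteDimensional K (Vsub ω' I d) := fd_of_le_homog _ Vsub_le_homog
    refine Submodule.eq_of_le_of_finrank_le (hVle d) ?_
    rw [finrank_Vsub_eq hr ω' I d, finrank_Vsub_eq hr ω I d]
  have main : ∀ (ω₁ ω₂ : Fin n → ℝ), (∀ d, Vsub ω₁ I d = Vsub ω₂ I d) →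
      iniIdealW ω₁ I ≤ iniIdealW ω₂ I := by
    intro ω₁ ω₂ hV x hx
    have hx' := (iniIdealW_eq_spanT hI x).1 hx
    have hle : Submodule.span K (TSet ω₁ I) ≤
        Submodule.restrictScalars K (iniIdealW ω₂ I) := by
      rw [Submodule.span_le]
      rintro p ⟨b, h', ⟨hh'I, e, he⟩, rfl⟩
      have hP : monomial b (1 : K) * iniW ω₁ h' = iniW ω₁ (monomial b (1 : K) * h') :=
        (iniW_monomial_mul _ _ _).symm
      have hmem : monomial b (1 : K) * iniW ω₁ h' ∈ Vsub ω₁ I (b.degree + e) :=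
        Submodule.subset_span ⟨monomial b (1 : K) * h',
          mem_Ud.2 ⟨Ideal.mul_mem_left _ _ hh'I, (isHomogeneous_monomial _ rfl).mul he⟩,
          hP.symm⟩
      exact Vsub_le_iniIdealW ((hV _) ▸ hmem)
    exact hle hx'
  exact le_antisymm (main ω ω' hVeq) (main ω' ω (fun d => (hVeq d).symm))
end

section
/- Let I and J be homogeneous ideals of A with canonical universal Gröbner bases G_1 and G_2 respectively. If supp(G_1) = supp(G_2), then the Gröbner fans of I and J coincide; that is, for all weights ω, ω' ∈ ℝ^n, in_ω(I) = in_{ω'}(I) if and only if in_ω(J) = in_{ω'}(J). -/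
open MvPolynomial

/-- The canonical universal Gröbner basis of `I`: the union of all its reduced
Gröbner bases. -/
def cUGB {K : Type*} [Field K] {n : ℕ} (I : Ideal (MvPolynomial (Fin n) K)) :
    Set (MvPolynomial (Fin n) K) :=
  {f | ∃ r : (Fin n →₀ ℕ) → (Fin n →₀ ℕ) → Prop, IsMonomialOrder n r ∧
    ∃ G : Finset (MvPolynomial (Fin n) K), IsRGB r I G ∧ f ∈ G}

-- ===================== auxiliary development =====================
namespace StGF

open MvPolynomial

variable {K : Type*} [Field K] {n : ℕ}

/-! ### Weights -/

theorem wt_add (θ : Fin n → ℝ) (a b : Fin n →₀ ℕ) : wt θ (a + b) = wt θ a + wt θ b := by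
  simp [wt, Finsupp.add_apply, mul_add, Finset.sum_add_distrib]

theorem wt_pos {θ : Fin n → ℝ} (hθ : ∀ i, 0 < θ i) {c : Fin n →₀ ℕ} (hc : c ≠ 0) :
    0 < wt θ c := by
  obtain ⟨i, hi⟩ : ∃ i, c i ≠ 0 := by
    by_contra hcon
    push_neg at hcon
    exact hc (Finsupp.ext fun i => hcon i)
  refine Finset.sum_pos' (fun j _ => ?_) ⟨i, Finset.mem_univ i, ?_⟩
  · exact mul_nonneg (le_of_lt (hθ j)) (Nat.cast_nonneg _)
  · have : (0:ℝ) < (c i : ℝ) := by exact_mod_cast Nat.pos_of_ne_zero hi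
    exact mul_pos (hθ i) this

theorem wt_sub {θ : Fin n → ℝ} {a b : Fin n →₀ ℕ} (h : a ≤ b) :
    wt θ (b - a) = wt θ b - wt θ a := by
  have : (b - a) + a = b := tsub_add_cancel_of_le h
  have h2 := wt_add θ (b - a) a
  rw [this] at h2
  linarith

/-! ### Maxima of finite sets under a trichotomous transitive relation -/

theorem exists_rmax (r : (Fin n →₀ ℕ) → (Fin n →₀ ℕ) → Prop)
    (htri : ∀ a b, a = b ∨ r a b ∨ r b a)
    (htr : ∀ a b c, r a b → r b c → r a c)
    {s : Finset (Fin n →₀ ℕ)} (hs : s.Nonempty) :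
    ∃ m ∈ s, ∀ x ∈ s, x = m ∨ r x m := by
  classical
  revert hs
  induction s using Finset.induction_on with
  | empty => exact fun hs => absurd hs (by simp)
  | @insert a s ha ih =>
    intro _
    rcases s.eq_empty_or_nonempty with rfl | hs'
    · exact ⟨a, by simp, by simp⟩
    · obtain ⟨m, hm, hmax⟩ := ih hs'
      rcases htri a m with heq | hr | hr
      · refine ⟨m, Finset.mem_insert_of_mem hm, fun x hx => ?_⟩
        rcases Finset.mem_insert.1 hx with rfl | hx
        · exact Or.inl heq
        · exact hmax x hx
      · refine ⟨m, Finset.mem_insert_of_mem hm, fun x hx => ?_⟩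
        rcases Finset.mem_insert.1 hx with rfl | hx
        · exact Or.inr hr
        · exact hmax x hx
      · refine ⟨a, Finset.mem_insert_self a s, fun x hx => ?_⟩
        rcases Finset.mem_insert.1 hx with rfl | hx
        · exact Or.inl rfl
        · rcases hmax x hx with rfl | hr2
          · exact Or.inr hr
          · exact Or.inr (htr _ _ _ hr2 hr)

/-! ### The weight-then-lex monomial order -/

/-- The order on exponent vectors: compare `θ`-weights, break ties lexicographically. -/
def wo (θ : Fin n → ℝ) (a b : Fin n →₀ ℕ) : Prop :=
  wt θ a < wt θ b ∨ (wt θ a = wt θ b ∧ toLex a < toLex b)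

theorem wo_trichot (θ : Fin n → ℝ) (a b : Fin n →₀ ℕ) : a = b ∨ wo θ a b ∨ wo θ b a := by
  rcases lt_trichotomy (wt θ a) (wt θ b) with h | h | h
  · exact Or.inr (Or.inl (Or.inl h))
  · rcases lt_trichotomy (toLex a) (toLex b) with h2 | h2 | h2
    · exact Or.inr (Or.inl (Or.inr ⟨h, h2⟩))
    · exact Or.inl (toLex.injective h2)
    · exact Or.inr (Or.inr (Or.inr ⟨h.symm, h2⟩))
  · exact Or.inr (Or.inr (Or.inl h))

theorem wo_trans (θ : Fin n → ℝ) (a b c : Fin n →₀ ℕ) (h1 : wo θ a b) (h2 : wo θ b c) :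
    wo θ a c := by
  rcases h1 with h1 | ⟨h1, h1'⟩ <;> rcases h2 with h2 | ⟨h2, h2'⟩
  · exact Or.inl (h1.trans h2)
  · exact Or.inl (h2 ▸ h1)
  · exact Or.inl (h1 ▸ h2)
  · exact Or.inr ⟨h1.trans h2, h1'.trans h2'⟩

theorem wo_irrefl (θ : Fin n → ℝ) (a : Fin n →₀ ℕ) : ¬ wo θ a a := by
  rintro (h | ⟨h, h'⟩)
  · exact lt_irrefl _ h
  · exact lt_irrefl _ h'

theorem wo_asymm {θ : Fin n → ℝ} {a b : Fin n →₀ ℕ} (h : wo θ a b) : ¬ wo θ b a :=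
  fun h' => wo_irrefl θ a (wo_trans θ a b a h h')

theorem wo_add {θ : Fin n → ℝ} {a b : Fin n →₀ ℕ} (c : Fin n →₀ ℕ) (h : wo θ a b) :
    wo θ (a + c) (b + c) := by
  rcases h with h | ⟨h, h'⟩
  · exact Or.inl (by rw [wt_add, wt_add]; linarith)
  · refine Or.inr ⟨by rw [wt_add, wt_add]; linarith, ?_⟩
    exact add_lt_add_left (α := Lex (Fin n →₀ ℕ)) h' (toLex c)

theorem wo_zero_min {θ : Fin n → ℝ} (hθ : ∀ i, 0 < θ i) (a : Fin n →₀ ℕ) {c : Fin n →₀ ℕ}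
    (hc : c ≠ 0) : wo θ a (a + c) := by
  left
  rw [wt_add]
  have := wt_pos hθ hc
  linarith

theorem isMonomialOrder_wo {θ : Fin n → ℝ} (hθ : ∀ i, 0 < θ i) : IsMonomialOrder n (wo θ) :=
  ⟨⟨fun a b h1 h2 => (wo_trichot θ a b).resolve_right (fun h => h.elim h1 h2)⟩,
    ⟨wo_trans θ⟩, ⟨wo_irrefl θ⟩, fun _ _ c h => wo_add c h,
    fun a _ hc => wo_zero_min hθ a hc⟩

/-- If the weight of `a` is strictly smaller, then `wo θ a b`. -/
theorem wo_of_wt_lt {θ : Fin n → ℝ} {a b : Fin n →₀ ℕ} (h : wt θ a < wt θ b) : wo θ a b :=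
  Or.inl h

theorem wt_le_of_wo {θ : Fin n → ℝ} {a b : Fin n →₀ ℕ} (h : wo θ a b) : wt θ a ≤ wt θ b := by
  rcases h with h | ⟨h, _⟩
  · exact le_of_lt h
  · exact le_of_eq h

/-! ### Leading monomials -/

theorem exists_leadOf (θ : Fin n → ℝ) {f : MvPolynomial (Fin n) K} (hf : f ≠ 0) :
    ∃ m, leadOf (wo θ) f m := by
  obtain ⟨m, hm, hmax⟩ := exists_rmax (wo θ) (wo_trichot θ) (wo_trans θ)
    (MvPolynomial.support_nonempty.mpr hf)
  exact ⟨m, hm, hmax⟩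

theorem leadOf_unique {r : (Fin n →₀ ℕ) → (Fin n →₀ ℕ) → Prop}
    (hirr : ∀ a, ¬ r a a) (htr : ∀ a b c, r a b → r b c → r a c)
    {f : MvPolynomial (Fin n) K} {m m' : Fin n →₀ ℕ}
    (h : leadOf r f m) (h' : leadOf r f m') : m = m' := by
  rcases h'.2 m h.1 with h1 | h1
  · exact h1
  · rcases h.2 m' h'.1 with h2 | h2
    · exact h2.symm
    · exact absurd (htr _ _ _ h1 h2) (hirr m)

theorem leadOf_wt_max {θ : Fin n → ℝ} {f : MvPolynomial (Fin n) K} {m : Fin n →₀ ℕ}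
    (h : leadOf (wo θ) f m) : ∀ m' ∈ f.support, wt θ m' ≤ wt θ m := by
  intro m' hm'
  rcases h.2 m' hm' with rfl | hr
  · exact le_rfl
  · exact wt_le_of_wo hr

end StGF
namespace StGF

open MvPolynomial

variable {K : Type*} [Field K] {n : ℕ}

/-! ### The face of a polynomial w.r.t. a weight, and basic `iniW` lemmas -/

open Classical in
/-- The set of monomials of `f` of maximal `θ`-weight. -/
noncomputable def face (θ : Fin n → ℝ) (f : MvPolynomial (Fin n) K) : Finset (Fin n →₀ ℕ) :=
  f.support.filter (fun m => ∀ m' ∈ f.support, wt θ m' ≤ wt θ m)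

theorem mem_face_iff {θ : Fin n → ℝ} {f : MvPolynomial (Fin n) K} {μ : Fin n →₀ ℕ} :
    μ ∈ face θ f ↔ μ ∈ f.support ∧ ∀ m' ∈ f.support, wt θ m' ≤ wt θ μ := by
  classical
  simp [face]

theorem iniW_def' (θ : Fin n → ℝ) (f : MvPolynomial (Fin n) K) :
    iniW θ f = ∑ m ∈ face θ f, monomial m (coeff m f) := by
  classical
  rw [iniW, face]

theorem coeff_iniW (θ : Fin n → ℝ) (f : MvPolynomial (Fin n) K) (μ : Fin n →₀ ℕ) :
    coeff μ (iniW θ f) = if μ ∈ face θ f then coeff μ f else 0 := by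
  classical
  rw [iniW_def', coeff_sum]
  simp_rw [coeff_monomial]
  rw [Finset.sum_ite_eq' (face θ f) μ (fun m => coeff m f)]

theorem support_iniW (θ : Fin n → ℝ) (f : MvPolynomial (Fin n) K) :
    (iniW θ f).support = face θ f := by
  classical
  ext μ
  rw [MvPolynomial.mem_support_iff, coeff_iniW]
  constructor
  · intro h
    by_contra hc
    simp [hc] at h
  · intro h
    have : μ ∈ f.support := (mem_face_iff.1 h).1
    simp [h, MvPolynomial.mem_support_iff.1 this]

theorem coeff_iniW_of_mem {θ : Fin n → ℝ} {f : MvPolynomial (Fin n) K} {μ : Fin n →₀ ℕ}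
    (h : μ ∈ face θ f) : coeff μ (iniW θ f) = coeff μ f := by
  rw [coeff_iniW, if_pos h]

theorem face_nonempty {θ : Fin n → ℝ} {f : MvPolynomial (Fin n) K} (hf : f ≠ 0) :
    (face θ f).Nonempty := by
  obtain ⟨m, hlead⟩ := exists_leadOf (K := K) θ hf
  exact ⟨m, mem_face_iff.2 ⟨hlead.1, leadOf_wt_max hlead⟩⟩

theorem wt_eq_of_mem_face {θ : Fin n → ℝ} {f : MvPolynomial (Fin n) K} {μ μ' : Fin n →₀ ℕ}
    (h : μ ∈ face θ f) (h' : μ' ∈ face θ f) : wt θ μ = wt θ μ' := by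
  rw [mem_face_iff] at h h'
  exact le_antisymm (h'.2 μ h.1) (h.2 μ' h'.1)

@[simp] theorem iniW_zero (θ : Fin n → ℝ) : iniW θ (0 : MvPolynomial (Fin n) K) = 0 := by
  classical
  rw [iniW]
  simp

theorem iniW_ne_zero {θ : Fin n → ℝ} {f : MvPolynomial (Fin n) K} (hf : f ≠ 0) :
    iniW θ f ≠ 0 := by
  obtain ⟨μ, hμ⟩ := face_nonempty (θ := θ) hf
  intro hc
  have := coeff_iniW_of_mem hμ
  rw [hc] at this
  exact MvPolynomial.mem_support_iff.1 (mem_face_iff.1 hμ).1 this.symm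

theorem iniW_eq_zero_iff {θ : Fin n → ℝ} {f : MvPolynomial (Fin n) K} :
    iniW θ f = 0 ↔ f = 0 :=
  ⟨fun h => by_contra fun hf => iniW_ne_zero hf h, fun h => by simp [h]⟩

theorem mem_face_of_leadOf {θ : Fin n → ℝ} {f : MvPolynomial (Fin n) K} {m : Fin n →₀ ℕ}
    (h : leadOf (wo θ) f m) : m ∈ face θ f :=
  mem_face_iff.2 ⟨h.1, leadOf_wt_max h⟩

theorem iniW_eq_iniW_of_face_eq {θ θ' : Fin n → ℝ} {f : MvPolynomial (Fin n) K}
    (h : face θ f = face θ' f) : iniW θ f = iniW θ' f := by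
  rw [iniW_def', iniW_def', h]

theorem face_congr_support {θ : Fin n → ℝ} {f g : MvPolynomial (Fin n) K}
    (h : f.support = g.support) : face θ f = face θ g := by
  classical
  rw [face, face, h]

/-! ### Weight slices -/

open Classical in
/-- The slice of `f` consisting of monomials of `θ`-weight exactly `c`. -/
noncomputable def slc (θ : Fin n → ℝ) (c : ℝ) (f : MvPolynomial (Fin n) K) :
    MvPolynomial (Fin n) K :=
  ∑ m ∈ f.support.filter (fun m => wt θ m = c), monomial m (coeff m f)

theorem coeff_slc (θ : Fin n → ℝ) (c : ℝ) (f : MvPolynomial (Fin n) K) (μ : Fin n →₀ ℕ) :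
    coeff μ (slc θ c f) = if wt θ μ = c then coeff μ f else 0 := by
  classical
  rw [slc, coeff_sum]
  simp_rw [coeff_monomial]
  rw [Finset.sum_ite_eq' _ μ (fun m => coeff m f)]
  by_cases hs : μ ∈ f.support
  · by_cases hw : wt θ μ = c <;> simp [hs, hw]
  · have : coeff μ f = 0 := by simpa using hs
    by_cases hw : wt θ μ = c <;> simp [hs, hw, this]

theorem support_slc_subset (θ : Fin n → ℝ) (c : ℝ) (f : MvPolynomial (Fin n) K) :
    (slc θ c f).support ⊆ f.support := by
  intro μ hμ
  rw [MvPolynomial.mem_support_iff, coeff_slc] at hμ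
  rw [MvPolynomial.mem_support_iff]
  intro h
  simp [h] at hμ

theorem wt_of_mem_support_slc {θ : Fin n → ℝ} {c : ℝ} {f : MvPolynomial (Fin n) K}
    {μ : Fin n →₀ ℕ} (h : μ ∈ (slc θ c f).support) : wt θ μ = c := by
  rw [MvPolynomial.mem_support_iff, coeff_slc] at h
  by_contra hc
  simp [hc] at h

@[simp] theorem slc_zero (θ : Fin n → ℝ) (c : ℝ) : slc θ c (0 : MvPolynomial (Fin n) K) = 0 := by
  classical
  rw [slc]
  simp

theorem slc_add (θ : Fin n → ℝ) (c : ℝ) (f g : MvPolynomial (Fin n) K) :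
    slc θ c (f + g) = slc θ c f + slc θ c g := by
  apply MvPolynomial.ext
  intro μ
  rw [coeff_add, coeff_slc, coeff_slc, coeff_slc, coeff_add]
  by_cases hw : wt θ μ = c <;> simp [hw]

theorem slc_of_isobaric {θ : Fin n → ℝ} {c : ℝ} {f : MvPolynomial (Fin n) K}
    (h : ∀ μ ∈ f.support, wt θ μ = c) : slc θ c f = f := by
  apply MvPolynomial.ext
  intro μ
  rw [coeff_slc]
  by_cases hs : μ ∈ f.support
  · simp [h μ hs]
  · have : coeff μ f = 0 := by simpa using hs
    simp [this]

theorem slc_of_isobaric_ne {θ : Fin n → ℝ} {c W : ℝ} {f : MvPolynomial (Fin n) K}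
    (h : ∀ μ ∈ f.support, wt θ μ = W) (hc : c ≠ W) : slc θ c f = 0 := by
  apply MvPolynomial.ext
  intro μ
  rw [coeff_slc]
  simp only [coeff_zero]
  by_cases hs : μ ∈ f.support
  · rw [if_neg]
    intro hw
    exact hc (hw.symm.trans (h μ hs))
  · have h0 : coeff μ f = 0 := by simpa using hs
    by_cases hw : wt θ μ = c <;> simp [hw, h0]

theorem iniW_isobaric {θ : Fin n → ℝ} {f : MvPolynomial (Fin n) K} {μ₀ : Fin n →₀ ℕ}
    (h₀ : μ₀ ∈ face θ f) :
    ∀ μ ∈ (iniW θ f).support, wt θ μ = wt θ μ₀ := by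
  intro μ hμ
  rw [support_iniW] at hμ
  exact wt_eq_of_mem_face hμ h₀

/-- If some face element has weight `c`, the slice at `c` is the initial form. -/
theorem slc_eq_iniW {θ : Fin n → ℝ} {f : MvPolynomial (Fin n) K} {c : ℝ}
    (_hf : f ≠ 0) {μ₀ : Fin n →₀ ℕ} (h₀ : μ₀ ∈ face θ f) (hc : wt θ μ₀ = c) :
    slc θ c f = iniW θ f := by
  apply MvPolynomial.ext
  intro μ
  rw [coeff_slc, coeff_iniW]
  by_cases hs : μ ∈ f.support
  · have hiff : wt θ μ = c ↔ μ ∈ face θ f := by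
      constructor
      · intro hw
        refine mem_face_iff.2 ⟨hs, fun m' hm' => ?_⟩
        have := (mem_face_iff.1 h₀).2 m' hm'
        rw [hw]; linarith
      · intro hmem
        rw [← hc]
        exact wt_eq_of_mem_face hmem h₀
    by_cases hw : wt θ μ = c
    · rw [if_pos hw, if_pos (hiff.1 hw)]
    · rw [if_neg hw, if_neg (fun hm => hw (hiff.2 hm))]
  · have : coeff μ f = 0 := by simpa using hs
    simp [this]

/-- bound version -/
theorem iniW_eq_slc_of_bound {θ : Fin n → ℝ} {f : MvPolynomial (Fin n) K} {c : ℝ}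
    (hb : ∀ μ ∈ f.support, wt θ μ ≤ c) (hs : slc θ c f ≠ 0) :
    iniW θ f = slc θ c f := by
  obtain ⟨μ₀, hμ₀⟩ := MvPolynomial.support_nonempty.2 hs
  have hw0 : wt θ μ₀ = c := wt_of_mem_support_slc hμ₀
  have hms : μ₀ ∈ f.support := support_slc_subset θ c f hμ₀
  have hface : μ₀ ∈ face θ f := by
    refine mem_face_iff.2 ⟨hms, fun m' hm' => ?_⟩
    rw [hw0]
    exact hb m' hm'
  have hf : f ≠ 0 := by
    intro h
    rw [h] at hms
    simp at hms
  exact (slc_eq_iniW hf hface hw0).symm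

end StGF
namespace StGF

open MvPolynomial

variable {K : Type*} [Field K] {n : ℕ}

/-! ### Support of monomial multiples -/

theorem mem_support_monomial_mul {a μ : Fin n →₀ ℕ} {k : K} {f : MvPolynomial (Fin n) K}
    (h : μ ∈ (monomial a k * f).support) : a ≤ μ ∧ μ - a ∈ f.support := by
  rw [MvPolynomial.mem_support_iff, MvPolynomial.coeff_monomial_mul'] at h
  by_cases hle : a ≤ μ
  · rw [if_pos hle] at h
    refine ⟨hle, MvPolynomial.mem_support_iff.2 fun hc => h ?_⟩
    rw [hc, mul_zero]
  · rw [if_neg hle] at h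
    exact absurd rfl h

theorem slc_monomial_mul (θ : Fin n → ℝ) (c : ℝ) (a : Fin n →₀ ℕ) (k : K)
    (f : MvPolynomial (Fin n) K) :
    slc θ c (monomial a k * f) = monomial a k * slc θ (c - wt θ a) f := by
  apply MvPolynomial.ext
  intro μ
  rw [coeff_slc, MvPolynomial.coeff_monomial_mul', MvPolynomial.coeff_monomial_mul', coeff_slc]
  by_cases hle : a ≤ μ
  · rw [if_pos hle, if_pos hle]
    have hws : wt θ (μ - a) = wt θ μ - wt θ a := wt_sub hle
    by_cases hw : wt θ μ = c
    · rw [if_pos hw, if_pos (by rw [hws, hw])]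
    · rw [if_neg hw, if_neg (fun hcon => hw (by rw [hws] at hcon; linarith)), mul_zero]
  · rw [if_neg hle, if_neg hle]
    by_cases hw : wt θ μ = c <;> simp [hw]

theorem monomial_mul_ne_zero {a : Fin n →₀ ℕ} {k : K} (hk : k ≠ 0)
    {f : MvPolynomial (Fin n) K} (hf : f ≠ 0) : monomial a k * f ≠ 0 := by
  obtain ⟨μ, hμ⟩ := MvPolynomial.support_nonempty.2 hf
  intro hc
  have : coeff (a + μ) (monomial a k * f) = k * coeff μ f := MvPolynomial.coeff_monomial_mul _ _ _ _
  rw [hc, coeff_zero] at this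
  exact MvPolynomial.mem_support_iff.1 hμ (by
    rcases mul_eq_zero.1 this.symm with h | h
    · exact absurd h hk
    · exact h)

theorem iniW_monomial_mul (θ : Fin n → ℝ) (a : Fin n →₀ ℕ) {k : K} (hk : k ≠ 0)
    (f : MvPolynomial (Fin n) K) :
    iniW θ (monomial a k * f) = monomial a k * iniW θ f := by
  by_cases hf : f = 0
  · simp [hf]
  obtain ⟨μ₀, hμ₀⟩ := face_nonempty (θ := θ) hf
  set c : ℝ := wt θ a + wt θ μ₀ with hc
  have hb : ∀ μ ∈ (monomial a k * f).support, wt θ μ ≤ c := by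
    intro μ hμ
    obtain ⟨hle, hsup⟩ := mem_support_monomial_mul hμ
    have h1 : wt θ (μ - a) ≤ wt θ μ₀ := (mem_face_iff.1 hμ₀).2 _ hsup
    have h2 : wt θ (μ - a) = wt θ μ - wt θ a := wt_sub hle
    rw [hc]; linarith
  have hslc : slc θ c (monomial a k * f) = monomial a k * iniW θ f := by
    rw [slc_monomial_mul]
    congr 1
    have : c - wt θ a = wt θ μ₀ := by rw [hc]; ring
    rw [this]
    exact slc_eq_iniW hf hμ₀ rfl
  have hne : slc θ c (monomial a k * f) ≠ 0 := by
    rw [hslc]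
    exact monomial_mul_ne_zero hk (iniW_ne_zero hf)
  rw [iniW_eq_slc_of_bound hb hne, hslc]

/-! ### The structure lemma for weighted initial ideals -/

theorem iniW_mem_iniIdealW {θ : Fin n → ℝ} {I : Ideal (MvPolynomial (Fin n) K)}
    {f : MvPolynomial (Fin n) K} (hf : f ∈ I) : iniW θ f ∈ iniIdealW θ I :=
  Ideal.subset_span ⟨f, hf, rfl⟩

private theorem slc_good_add {θ : Fin n → ℝ} {I : Ideal (MvPolynomial (Fin n) K)} {c : ℝ}
    {x y : MvPolynomial (Fin n) K}
    (hx : ∃ w ∈ I, slc θ c x = iniW θ w) (hy : ∃ w ∈ I, slc θ c y = iniW θ w) :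
    ∃ w ∈ I, slc θ c (x + y) = iniW θ w := by
  obtain ⟨wx, hwxI, hwx⟩ := hx
  obtain ⟨wy, hwyI, hwy⟩ := hy
  rw [slc_add]
  by_cases h1 : iniW θ wx = 0
  · exact ⟨wy, hwyI, by rw [hwx, hwy, h1, zero_add]⟩
  by_cases h2 : iniW θ wy = 0
  · exact ⟨wx, hwxI, by rw [hwx, hwy, h2, add_zero]⟩
  have hwx0 : wx ≠ 0 := fun h => h1 (by simp [h])
  have hwy0 : wy ≠ 0 := fun h => h2 (by simp [h])
  -- all face monomials of wx, wy have weight c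
  have hfx : ∀ μ ∈ face θ wx, wt θ μ = c := by
    intro μ hμ
    have : μ ∈ (slc θ c x).support := by
      rw [hwx, support_iniW]; exact hμ
    exact wt_of_mem_support_slc this
  have hfy : ∀ μ ∈ face θ wy, wt θ μ = c := by
    intro μ hμ
    have : μ ∈ (slc θ c y).support := by
      rw [hwy, support_iniW]; exact hμ
    exact wt_of_mem_support_slc this
  obtain ⟨μx, hμx⟩ := face_nonempty (θ := θ) hwx0
  obtain ⟨μy, hμy⟩ := face_nonempty (θ := θ) hwy0
  have hbx : ∀ μ ∈ wx.support, wt θ μ ≤ c := by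
    intro μ hμ
    have := (mem_face_iff.1 hμx).2 μ hμ
    rw [← hfx μx hμx]; exact this
  have hby : ∀ μ ∈ wy.support, wt θ μ ≤ c := by
    intro μ hμ
    have := (mem_face_iff.1 hμy).2 μ hμ
    rw [← hfy μy hμy]; exact this
  have hslcx : slc θ c wx = iniW θ wx := slc_eq_iniW hwx0 hμx (hfx μx hμx)
  have hslcy : slc θ c wy = iniW θ wy := slc_eq_iniW hwy0 hμy (hfy μy hμy)
  by_cases hsum : iniW θ wx + iniW θ wy = 0
  · exact ⟨0, I.zero_mem, by rw [hwx, hwy, hsum]; simp⟩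
  · refine ⟨wx + wy, I.add_mem hwxI hwyI, ?_⟩
    have hb : ∀ μ ∈ (wx + wy).support, wt θ μ ≤ c := by
      intro μ hμ
      rcases Finset.mem_union.1 (MvPolynomial.support_add hμ) with h | h
      · exact hbx μ h
      · exact hby μ h
    have hslcsum : slc θ c (wx + wy) = iniW θ wx + iniW θ wy := by
      rw [slc_add, hslcx, hslcy]
    rw [hwx, hwy, ← hslcsum, iniW_eq_slc_of_bound hb (by rw [hslcsum]; exact hsum)]

private theorem slc_good_monomial_mul {θ : Fin n → ℝ} {I : Ideal (MvPolynomial (Fin n) K)}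
    {x : MvPolynomial (Fin n) K} (a : Fin n →₀ ℕ) (k : K)
    (hx : ∀ c : ℝ, ∃ w ∈ I, slc θ c x = iniW θ w) :
    ∀ c : ℝ, ∃ w ∈ I, slc θ c (monomial a k * x) = iniW θ w := by
  intro c
  by_cases hk : k = 0
  · exact ⟨0, I.zero_mem, by simp [hk]⟩
  obtain ⟨w, hwI, hw⟩ := hx (c - wt θ a)
  by_cases hw0 : w = 0
  · refine ⟨0, I.zero_mem, ?_⟩
    rw [slc_monomial_mul, hw, hw0]
    simp
  · refine ⟨monomial a k * w, Ideal.mul_mem_left I _ hwI, ?_⟩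
    rw [slc_monomial_mul, hw, iniW_monomial_mul θ a hk]

/-- **Structure lemma**: every weight-slice of an element of `iniIdealW θ I` is the
initial form of an element of `I`. -/
theorem slc_mem_iniIdealW {θ : Fin n → ℝ} {I : Ideal (MvPolynomial (Fin n) K)}
    {p : MvPolynomial (Fin n) K} (hp : p ∈ iniIdealW θ I) :
    ∀ c : ℝ, ∃ w ∈ I, slc θ c p = iniW θ w := by
  refine Submodule.span_induction ?_ ?_ ?_ ?_ hp
  · rintro x ⟨f, hfI, rfl⟩ c
    by_cases hf : f = 0
    · exact ⟨0, I.zero_mem, by simp [hf]⟩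
    obtain ⟨μ₀, hμ₀⟩ := face_nonempty (θ := θ) hf
    by_cases hc : c = wt θ μ₀
    · exact ⟨f, hfI, by rw [hc, slc_of_isobaric (iniW_isobaric hμ₀)]⟩
    · exact ⟨0, I.zero_mem, by rw [slc_of_isobaric_ne (iniW_isobaric hμ₀) hc]; simp⟩
  · intro c
    exact ⟨0, I.zero_mem, by simp⟩
  · intro x y _ _ hx hy c
    exact slc_good_add (hx c) (hy c)
  · intro h x _ hx
    rw [smul_eq_mul]
    -- decompose h into monomials
    have hrep : h * x = ∑ a ∈ h.support, monomial a (coeff a h) * x := by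
      conv_lhs => rw [h.as_sum]
      rw [Finset.sum_mul]
    rw [hrep]
    -- prove goodness of finite sums of monomial multiples
    have : ∀ (s : Finset (Fin n →₀ ℕ)),
        ∀ c : ℝ, ∃ w ∈ I, slc θ c (∑ a ∈ s, monomial a (coeff a h) * x) = iniW θ w := by
      intro s
      classical
      induction s using Finset.induction_on with
      | empty => intro c; exact ⟨0, I.zero_mem, by simp⟩
      | @insert a s ha ih =>
        intro c
        rw [Finset.sum_insert ha]
        exact slc_good_add (slc_good_monomial_mul a (coeff a h) hx c) (ih c)
    exact this h.support

/-- **Standardness lemma**: every nonzero element of `iniIdealW θ I` has a monomial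
lying in the monomial initial ideal `iniIdeal (wo θ) I`. -/
theorem exists_nonstandard_mem {θ : Fin n → ℝ} {I : Ideal (MvPolynomial (Fin n) K)}
    {p : MvPolynomial (Fin n) K} (hp : p ∈ iniIdealW θ I) (h0 : p ≠ 0) :
    ∃ μ ∈ p.support, (monomial μ (1:K)) ∈ iniIdeal (wo θ) I := by
  obtain ⟨μ₀, hμ₀⟩ := MvPolynomial.support_nonempty.2 h0
  obtain ⟨w, hwI, hw⟩ := slc_mem_iniIdealW hp (wt θ μ₀)
  have hv0 : slc θ (wt θ μ₀) p ≠ 0 := by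
    intro hc
    have := coeff_slc θ (wt θ μ₀) p μ₀
    rw [hc, coeff_zero, if_pos rfl] at this
    exact MvPolynomial.mem_support_iff.1 hμ₀ this.symm
  have hw0 : w ≠ 0 := by
    intro hc
    rw [hc] at hw
    simp at hw
    exact hv0 hw
  obtain ⟨m, hm⟩ := exists_leadOf θ hw0
  refine ⟨m, ?_, Ideal.subset_span ⟨w, hwI, hw0, m, hm, rfl⟩⟩
  have : m ∈ (slc θ (wt θ μ₀) p).support := by
    rw [hw, support_iniW]
    exact mem_face_of_leadOf hm
  exact support_slc_subset _ _ _ this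

end StGF
namespace StGF

open MvPolynomial

variable {K : Type*} [Field K] {n : ℕ}

/-! ### Homogeneity -/

/-- `f` is homogeneous of degree `d` (support-based formulation). -/
def Hg (f : MvPolynomial (Fin n) K) (d : ℕ) : Prop := ∀ μ ∈ f.support, μ.degree = d

theorem hg_homogeneousComponent (d : ℕ) (f : MvPolynomial (Fin n) K) :
    Hg (homogeneousComponent d f) d := by
  intro μ hμ
  rw [MvPolynomial.mem_support_iff, coeff_homogeneousComponent] at hμ
  by_contra hc
  rw [if_neg hc] at hμ
  exact hμ rfl

theorem support_homogeneousComponent_subset (d : ℕ) (f : MvPolynomial (Fin n) K) :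
    (homogeneousComponent d f).support ⊆ f.support := by
  intro μ hμ
  rw [MvPolynomial.mem_support_iff, coeff_homogeneousComponent] at hμ
  rw [MvPolynomial.mem_support_iff]
  intro h
  rw [h] at hμ
  simp at hμ

theorem coeff_homogeneousComponent_of_mem {d : ℕ} {f : MvPolynomial (Fin n) K}
    {μ : Fin n →₀ ℕ} (h : μ.degree = d) :
    coeff μ (homogeneousComponent d f) = coeff μ f := by
  rw [coeff_homogeneousComponent, if_pos h]

theorem slc_sum (θ : Fin n → ℝ) (c : ℝ) {α : Type*} (s : Finset α)
    (F : α → MvPolynomial (Fin n) K) :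
    slc θ c (∑ a ∈ s, F a) = ∑ a ∈ s, slc θ c (F a) := by
  classical
  induction s using Finset.induction_on with
  | empty => simp
  | @insert a s ha ih => rw [Finset.sum_insert ha, Finset.sum_insert ha, slc_add, ih]

/-- The weighted initial ideal of a homogeneous ideal is spanned by initial forms of
homogeneous elements. -/
theorem iniIdealW_eq_span_homog (θ : Fin n → ℝ) {I : Ideal (MvPolynomial (Fin n) K)}
    (hI : IsHomogIdeal I) :
    iniIdealW θ I =
      Ideal.span {p | ∃ u ∈ I, (∃ d, Hg u d) ∧ p = iniW θ u} := by
  apply le_antisymm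
  · rw [iniIdealW]
    apply Ideal.span_le.2
    rintro p ⟨f, hfI, rfl⟩
    by_cases hf : f = 0
    · rw [hf, iniW_zero]; exact Ideal.zero_mem _
    obtain ⟨μ₀, hμ₀⟩ := face_nonempty (θ := θ) hf
    have key : iniW θ f = ∑ i ∈ Finset.range (f.totalDegree + 1),
        slc θ (wt θ μ₀) (homogeneousComponent i f) := by
      rw [← slc_sum, sum_homogeneousComponent, slc_eq_iniW hf hμ₀ rfl]
    rw [key]
    apply Submodule.sum_mem
    intro i _
    by_cases hz : slc θ (wt θ μ₀) (homogeneousComponent i f) = 0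
    · rw [hz]; exact Ideal.zero_mem _
    have hb : ∀ μ ∈ (homogeneousComponent i f).support, wt θ μ ≤ wt θ μ₀ :=
      fun μ hμ => (mem_face_iff.1 hμ₀).2 μ (support_homogeneousComponent_subset i f hμ)
    rw [← iniW_eq_slc_of_bound hb hz]
    exact Ideal.subset_span ⟨homogeneousComponent i f, hI f hfI i,
      ⟨i, hg_homogeneousComponent i f⟩, rfl⟩
  · apply Ideal.span_le.2
    rintro p ⟨u, huI, _, rfl⟩
    exact iniW_mem_iniIdealW huI

theorem wt_shift (θ : Fin n → ℝ) (c : ℝ) (μ : Fin n →₀ ℕ) :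
    wt (fun i => θ i + c) μ = wt θ μ + c * (μ.degree : ℝ) := by
  have hdeg : (μ.degree : ℝ) = ∑ i : Fin n, (μ i : ℝ) := by
    rw [Finsupp.degree_apply]
    rw [Finset.sum_subset (Finset.subset_univ μ.support)]
    · push_cast
      rfl
    · intro x _ hx
      simp [Finsupp.notMem_support_iff.1 hx]
  rw [wt, wt, hdeg, Finset.mul_sum, ← Finset.sum_add_distrib]
  congr 1
  ext i
  ring

theorem face_shift {θ : Fin n → ℝ} {c : ℝ} {u : MvPolynomial (Fin n) K} {d : ℕ}
    (hu : Hg u d) : face θ u = face (fun i => θ i + c) u := by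
  ext μ
  rw [mem_face_iff, mem_face_iff]
  constructor
  · rintro ⟨hs, hmax⟩
    refine ⟨hs, fun m' hm' => ?_⟩
    rw [wt_shift, wt_shift, hu μ hs, hu m' hm']
    have := hmax m' hm'
    linarith
  · rintro ⟨hs, hmax⟩
    refine ⟨hs, fun m' hm' => ?_⟩
    have := hmax m' hm'
    rw [wt_shift, wt_shift, hu μ hs, hu m' hm'] at this
    linarith

theorem iniW_shift {θ : Fin n → ℝ} {c : ℝ} {u : MvPolynomial (Fin n) K} {d : ℕ}
    (hu : Hg u d) : iniW θ u = iniW (fun i => θ i + c) u := by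
  rw [iniW_def', iniW_def', face_shift (c := c) hu]

/-- Positivization: adding a constant to the weight vector does not change the
initial ideal of a homogeneous ideal. -/
theorem iniIdealW_shift (θ : Fin n → ℝ) (c : ℝ) {I : Ideal (MvPolynomial (Fin n) K)}
    (hI : IsHomogIdeal I) :
    iniIdealW θ I = iniIdealW (fun i => θ i + c) I := by
  rw [iniIdealW_eq_span_homog θ hI, iniIdealW_eq_span_homog _ hI]
  congr 1
  ext p
  constructor
  · rintro ⟨u, huI, ⟨d, hud⟩, rfl⟩
    exact ⟨u, huI, ⟨d, hud⟩, iniW_shift hud⟩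
  · rintro ⟨u, huI, ⟨d, hud⟩, rfl⟩
    exact ⟨u, huI, ⟨d, hud⟩, (iniW_shift hud).symm⟩

end StGF
namespace StGF

open MvPolynomial

variable {K : Type*} [Field K] {n : ℕ}

/-! ### The monomial initial ideal as a span of monomials -/

/-- The set of leading monomials of nonzero elements of `I`. -/
def LdSet (r : (Fin n →₀ ℕ) → (Fin n →₀ ℕ) → Prop) (I : Ideal (MvPolynomial (Fin n) K)) :
    Set (Fin n →₀ ℕ) :=
  {m | ∃ f ∈ I, f ≠ 0 ∧ leadOf r f m}

theorem iniIdeal_eq_span_image (r : (Fin n →₀ ℕ) → (Fin n →₀ ℕ) → Prop)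
    (I : Ideal (MvPolynomial (Fin n) K)) :
    iniIdeal r I = Ideal.span ((fun m => monomial m (1 : K)) '' LdSet r I) := by
  rw [iniIdeal]
  congr 1
  ext p
  constructor
  · rintro ⟨f, hfI, h0, m, hm, rfl⟩
    exact ⟨m, ⟨f, hfI, h0, hm⟩, rfl⟩
  · rintro ⟨m, ⟨f, hfI, h0, hm⟩, rfl⟩
    exact ⟨f, hfI, h0, m, hm, rfl⟩

theorem monomial_mem_iniIdeal_iff {r : (Fin n →₀ ℕ) → (Fin n →₀ ℕ) → Prop}
    {I : Ideal (MvPolynomial (Fin n) K)} {μ : Fin n →₀ ℕ} :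
    monomial μ (1 : K) ∈ iniIdeal r I ↔ ∃ m ∈ LdSet r I, m ≤ μ := by
  rw [iniIdeal_eq_span_image, MvPolynomial.mem_ideal_span_monomial_image]
  constructor
  · intro h
    refine h μ ?_
    rw [MvPolynomial.mem_support_iff, coeff_monomial, if_pos rfl]
    exact one_ne_zero
  · intro h xi hxi
    rw [MvPolynomial.mem_support_iff, coeff_monomial] at hxi
    by_cases hx : μ = xi
    · exact hx ▸ h
    · rw [if_neg hx] at hxi
      exact absurd rfl hxi

theorem monomial_dvd_mem_iniIdeal {r : (Fin n →₀ ℕ) → (Fin n →₀ ℕ) → Prop}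
    {I : Ideal (MvPolynomial (Fin n) K)} {m μ : Fin n →₀ ℕ}
    (hm : monomial m (1 : K) ∈ iniIdeal r I) (hle : m ≤ μ) :
    monomial μ (1 : K) ∈ iniIdeal r I := by
  have : monomial μ (1 : K) = monomial (μ - m) (1 : K) * monomial m (1 : K) := by
    rw [MvPolynomial.monomial_mul, one_mul, tsub_add_cancel_of_le hle]
  rw [this]
  exact Ideal.mul_mem_left _ _ hm

theorem monomial_mem_of_ldSet {r : (Fin n →₀ ℕ) → (Fin n →₀ ℕ) → Prop}
    {I : Ideal (MvPolynomial (Fin n) K)} {m : Fin n →₀ ℕ} (hm : m ∈ LdSet r I) :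
    monomial m (1 : K) ∈ iniIdeal r I := by
  obtain ⟨f, hfI, h0, hl⟩ := hm
  exact Ideal.subset_span ⟨f, hfI, h0, m, hl, rfl⟩

/-! ### Degrees of exponent vectors -/

theorem degree_eq_sum_univ (μ : Fin n →₀ ℕ) : μ.degree = ∑ i : Fin n, μ i := by
  rw [Finsupp.degree_apply]
  exact Finset.sum_subset (Finset.subset_univ _)
    (fun x _ hx => Finsupp.notMem_support_iff.1 hx)

theorem degree_add (a b : Fin n →₀ ℕ) : (a + b).degree = a.degree + b.degree := by
  simp [degree_eq_sum_univ, Finsupp.add_apply, Finset.sum_add_distrib]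

theorem degree_pos_of_ne_zero {μ : Fin n →₀ ℕ} (h : μ ≠ 0) : 0 < μ.degree := by
  obtain ⟨i, hi⟩ : ∃ i, μ i ≠ 0 := by
    by_contra hcon
    push_neg at hcon
    exact h (Finsupp.ext fun i => hcon i)
  have hmem : i ∈ μ.support := Finsupp.mem_support_iff.2 hi
  calc 0 < μ i := Nat.pos_of_ne_zero hi
    _ ≤ μ.degree := Finset.single_le_sum (fun j _ => Nat.zero_le _) hmem

theorem degree_lt_of_lt {μ ν : Fin n →₀ ℕ} (hle : μ ≤ ν) (hne : μ ≠ ν) :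
    μ.degree < ν.degree := by
  have hsub : ν - μ + μ = ν := tsub_add_cancel_of_le hle
  have hdeg : ν.degree = (ν - μ).degree + μ.degree := by
    conv_lhs => rw [← hsub]
    rw [degree_add]
  have hne0 : ν - μ ≠ 0 := by
    intro hc
    rw [hc, zero_add] at hsub
    exact hne.symm hsub.symm
  have := degree_pos_of_ne_zero hne0
  omega

/-! ### Extraction of a finite minimal generating antichain -/

theorem exists_min_antichain {r : (Fin n →₀ ℕ) → (Fin n →₀ ℕ) → Prop}
    (I : Ideal (MvPolynomial (Fin n) K)) :
    ∃ Min : Finset (Fin n →₀ ℕ),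
      (↑Min ⊆ LdSet r I) ∧
      (∀ μ, monomial μ (1:K) ∈ iniIdeal r I ↔ ∃ m ∈ Min, m ≤ μ) ∧
      (∀ m₁ ∈ Min, ∀ m₂ ∈ Min, m₁ ≤ m₂ → m₁ = m₂) ∧
      (iniIdeal r I = Ideal.span ((fun m => monomial m (1 : K)) '' ↑Min)) := by
  classical
  -- finitely many generators from Noetherianity
  obtain ⟨P, hP⟩ := IsNoetherian.noetherian (iniIdeal r I)
  have hmem : ∀ p ∈ P, ∃ T : Finset (MvPolynomial (Fin n) K),
      ↑T ⊆ (fun m => monomial m (1 : K)) '' LdSet r I ∧ p ∈ Ideal.span (↑T) := by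
    intro p hp
    have : p ∈ iniIdeal r I := by
      rw [← hP]
      exact Ideal.subset_span hp
    rw [iniIdeal_eq_span_image] at this
    exact Submodule.mem_span_finite_of_mem_span this
  choose T hT1 hT2 using hmem
  set Tall : Finset (MvPolynomial (Fin n) K) := P.attach.biUnion (fun x => T x.1 x.2) with hTall
  have hTsub : ↑Tall ⊆ (fun m => monomial m (1 : K)) '' LdSet r I := by
    intro q hq
    rw [hTall] at hq
    simp only [Finset.coe_biUnion, Set.mem_iUnion, Finset.mem_coe] at hq
    obtain ⟨x, _, hx⟩ := hq
    exact hT1 x.1 x.2 hx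
  have hspanT : iniIdeal r I = Ideal.span (↑Tall) := by
    apply le_antisymm
    · rw [← hP]
      apply Ideal.span_le.2
      intro p hp
      have hsub : (↑(T p hp) : Set (MvPolynomial (Fin n) K)) ⊆ ↑Tall := by
        intro q hq
        rw [hTall]
        simp only [Finset.coe_biUnion, Set.mem_iUnion, Finset.mem_coe]
        exact ⟨⟨p, hp⟩, Finset.mem_attach _ _, hq⟩
      exact Ideal.span_mono hsub (hT2 p hp)
    · rw [iniIdeal_eq_span_image]
      exact Ideal.span_le.2 (fun q hq => Ideal.subset_span (hTsub hq))
  -- extract the monomial exponents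
  obtain ⟨V, hV1, hV2⟩ := Finset.subset_set_image_iff.1 hTsub
  have hspanV : iniIdeal r I = Ideal.span ((fun m => monomial m (1 : K)) '' ↑V) := by
    rw [hspanT, ← hV2, Finset.coe_image]
  -- take minimal elements
  set Min : Finset (Fin n →₀ ℕ) := V.filter (fun m => ∀ m' ∈ V, m' ≤ m → m' = m) with hMin
  have hMinV : Min ⊆ V := Finset.filter_subset _ _
  -- every element of V dominates an element of Min
  have hdom : ∀ v ∈ V, ∃ m ∈ Min, m ≤ v := by
    have haux : ∀ d : ℕ, ∀ v ∈ V, v.degree ≤ d → ∃ m ∈ Min, m ≤ v := by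
      intro d
      induction d using Nat.strong_induction_on with
      | _ d ih =>
        intro v hv hd
        by_cases hmin : ∀ m' ∈ V, m' ≤ v → m' = v
        · exact ⟨v, Finset.mem_filter.2 ⟨hv, hmin⟩, le_rfl⟩
        · push_neg at hmin
          obtain ⟨m', hm'V, hm'le, hm'ne⟩ := hmin
          have hlt : m'.degree < d := lt_of_lt_of_le (degree_lt_of_lt hm'le hm'ne) hd
          obtain ⟨m, hmMin, hmle⟩ := ih m'.degree hlt m' hm'V le_rfl
          exact ⟨m, hmMin, hmle.trans hm'le⟩
    exact fun v hv => haux v.degree v hv le_rfl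
  have hMinsub : ↑Min ⊆ LdSet r I := fun m hm => hV1 (hMinV hm)
  refine ⟨Min, hMinsub, ?_, ?_, ?_⟩
  · intro μ
    constructor
    · intro h
      rw [hspanV, MvPolynomial.mem_ideal_span_monomial_image] at h
      have := h μ (by rw [MvPolynomial.mem_support_iff, coeff_monomial, if_pos rfl]; exact one_ne_zero)
      obtain ⟨v, hvV, hvle⟩ := this
      obtain ⟨m, hmMin, hmle⟩ := hdom v hvV
      exact ⟨m, hmMin, hmle.trans hvle⟩
    · rintro ⟨m, hmMin, hmle⟩
      exact monomial_dvd_mem_iniIdeal (monomial_mem_of_ldSet (hV1 (hMinV hmMin))) hmle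
  · intro m₁ h₁ m₂ h₂ hle
    exact (Finset.mem_filter.1 h₂).2 m₁ (hMinV h₁) hle
  · rw [hspanV]
    apply le_antisymm
    · apply Ideal.span_le.2
      rintro p ⟨v, hvV, rfl⟩
      obtain ⟨m, hmMin, hmle⟩ := hdom v (by exact_mod_cast hvV)
      show monomial v (1:K) ∈ _
      have : (monomial v (1:K)) = monomial (v - m) (1:K) * monomial m (1:K) := by
        rw [MvPolynomial.monomial_mul, one_mul, tsub_add_cancel_of_le hmle]
      rw [this]
      exact Ideal.mul_mem_left _ _ (Ideal.subset_span ⟨m, by exact_mod_cast hmMin, rfl⟩)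
    · apply Ideal.span_le.2
      rintro p ⟨m, hmMin, rfl⟩
      exact Ideal.subset_span ⟨m, by exact_mod_cast (Finset.coe_subset.2 hMinV hmMin), rfl⟩

end StGF
namespace StGF

open MvPolynomial

variable {K : Type*} [Field K] {n : ℕ}

/-! ### The finite set of exponent vectors of fixed degree -/

/-- The finite set of exponent vectors of total degree `d`. -/
noncomputable def degMons (n : ℕ) (d : ℕ) : Finset (Fin n →₀ ℕ) := by
  classical
  exact (Finset.Iic (Finsupp.equivFunOnFinite.symm (fun _ : Fin n => d))).filter
    (fun μ => μ.degree = d)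

theorem mem_degMons {d : ℕ} {μ : Fin n →₀ ℕ} : μ ∈ degMons n d ↔ μ.degree = d := by
  classical
  rw [degMons]
  simp only [Finset.mem_filter, Finset.mem_Iic]
  constructor
  · exact fun h => h.2
  · intro h
    refine ⟨?_, h⟩
    intro i
    have h1 : μ i ≤ μ.degree := Finsupp.le_degree i μ
    have h2 : (Finsupp.equivFunOnFinite.symm (fun _ : Fin n => d)) i = d := rfl
    rw [h2]
    omega

open Classical in
/-- The monomials of degree `d` which are `≼` a given one w.r.t. the order `wo θ`. -/
noncomputable def below (θ : Fin n → ℝ) (d : ℕ) (β : Fin n →₀ ℕ) : Finset (Fin n →₀ ℕ) :=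
  (degMons n d).filter (fun μ => μ = β ∨ wo θ μ β)

theorem mem_below {θ : Fin n → ℝ} {d : ℕ} {β μ : Fin n →₀ ℕ} :
    μ ∈ below θ d β ↔ μ.degree = d ∧ (μ = β ∨ wo θ μ β) := by
  classical
  rw [below]
  simp [mem_degMons]

theorem below_card_lt {θ : Fin n → ℝ} {d : ℕ} {β β' : Fin n →₀ ℕ}
    (h : wo θ β' β) (hd' : β'.degree = d) (hd : β.degree = d) :
    (below θ d β').card < (below θ d β).card := by
  apply Finset.card_lt_card
  rw [Finset.ssubset_iff_of_subset]
  · refine ⟨β, mem_below.2 ⟨hd, Or.inl rfl⟩, fun hc => ?_⟩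
    rcases (mem_below.1 hc).2 with hh | hh
    · rw [hh] at h
      exact wo_irrefl θ _ h
    · exact wo_asymm h hh
  · intro μ hμ
    rcases mem_below.1 hμ with ⟨hdeg, heq | hwo⟩
    · exact mem_below.2 ⟨hdeg, Or.inr (heq ▸ h)⟩
    · exact mem_below.2 ⟨hdeg, Or.inr (wo_trans θ _ _ _ hwo h)⟩

/-! ### Monic homogeneous elements realizing each lead -/

theorem support_smul_ne_zero {c : K} (hc : c ≠ 0) (f : MvPolynomial (Fin n) K) :
    (c • f).support = f.support := by
  ext μ
  rw [MvPolynomial.mem_support_iff, MvPolynomial.mem_support_iff, MvPolynomial.coeff_smul]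
  simp [hc]

theorem smul_mem_ideal {c : K} {I : Ideal (MvPolynomial (Fin n) K)}
    {f : MvPolynomial (Fin n) K} (hf : f ∈ I) : c • f ∈ I := by
  rw [MvPolynomial.smul_eq_C_mul]
  exact Ideal.mul_mem_left _ _ hf

theorem exists_homog_monic_lead {θ : Fin n → ℝ} {I : Ideal (MvPolynomial (Fin n) K)}
    (hI : IsHomogIdeal I) {m : Fin n →₀ ℕ} (hm : m ∈ LdSet (wo θ) I) :
    ∃ v ∈ I, Hg v m.degree ∧ leadOf (wo θ) v m ∧ coeff m v = 1 := by
  obtain ⟨f, hfI, hf0, hlf⟩ := hm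
  set v₀ : MvPolynomial (Fin n) K := homogeneousComponent m.degree f with hv₀
  have hv₀I : v₀ ∈ I := hI f hfI m.degree
  have hv₀c : coeff m v₀ = coeff m f := coeff_homogeneousComponent_of_mem rfl
  have hm₀ : m ∈ v₀.support := by
    rw [MvPolynomial.mem_support_iff, hv₀c]
    exact MvPolynomial.mem_support_iff.1 hlf.1
  have hlead₀ : leadOf (wo θ) v₀ m :=
    ⟨hm₀, fun m' hm' => hlf.2 m' (support_homogeneousComponent_subset _ _ hm')⟩
  have hc0 : coeff m v₀ ≠ 0 := MvPolynomial.mem_support_iff.1 hm₀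
  refine ⟨(coeff m v₀)⁻¹ • v₀, smul_mem_ideal hv₀I, ?_, ?_, ?_⟩
  · intro μ hμ
    rw [support_smul_ne_zero (inv_ne_zero hc0)] at hμ
    exact hg_homogeneousComponent m.degree f μ hμ
  · constructor
    · rw [support_smul_ne_zero (inv_ne_zero hc0)]
      exact hm₀
    · intro m' hm'
      rw [support_smul_ne_zero (inv_ne_zero hc0)] at hm'
      exact hlead₀.2 m' hm'
  · rw [MvPolynomial.coeff_smul, smul_eq_mul, inv_mul_cancel₀ hc0]

theorem leadOf_monomial_mul {θ : Fin n → ℝ} {v : MvPolynomial (Fin n) K} {μ a : Fin n →₀ ℕ}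
    {k : K} (hk : k ≠ 0) (hl : leadOf (wo θ) v μ) :
    leadOf (wo θ) (monomial a k * v) (a + μ) := by
  constructor
  · rw [MvPolynomial.mem_support_iff, MvPolynomial.coeff_monomial_mul]
    exact mul_ne_zero hk (MvPolynomial.mem_support_iff.1 hl.1)
  · intro χ hχ
    obtain ⟨hle, hsup⟩ := mem_support_monomial_mul hχ
    have hχeq : χ - a + a = χ := tsub_add_cancel_of_le hle
    rcases hl.2 (χ - a) hsup with heq | hwo
    · left
      rw [← hχeq, heq, add_comm]
    · right
      have := wo_add a hwo
      rw [hχeq, add_comm μ a] at this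
      exact this

/-! ### Tail reduction -/

theorem support_sub_subset (u t : MvPolynomial (Fin n) K) :
    (u - t).support ⊆ u.support ∪ t.support := by
  intro χ hχ
  rw [MvPolynomial.mem_support_iff, MvPolynomial.coeff_sub] at hχ
  by_contra hc
  rw [Finset.mem_union] at hc
  push_neg at hc
  obtain ⟨h1, h2⟩ := hc
  rw [MvPolynomial.notMem_support_iff] at h1 h2
  rw [h1, h2, sub_zero] at hχ
  exact hχ rfl

theorem reduce_tails {θ : Fin n → ℝ} {I : Ideal (MvPolynomial (Fin n) K)}
    (hI : IsHomogIdeal I) {d : ℕ} {m : Fin n →₀ ℕ} :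
    ∀ (k : ℕ) (u : MvPolynomial (Fin n) K), u ∈ I → Hg u d → leadOf (wo θ) u m →
      coeff m u = 1 →
      (∀ β ∈ u.support, β ≠ m → monomial β (1:K) ∈ iniIdeal (wo θ) I →
        (below θ d β).card ≤ k) →
      ∃ g ∈ I, Hg g d ∧ leadOf (wo θ) g m ∧ coeff m g = 1 ∧
        (∀ β ∈ g.support, β ≠ m → monomial β (1:K) ∉ iniIdeal (wo θ) I) := by
  intro k
  induction k with
  | zero =>
    intro u huI hud hlead hc hmeas
    refine ⟨u, huI, hud, hlead, hc, fun β hβs hβne hβmem => ?_⟩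
    have h1 := hmeas β hβs hβne hβmem
    have h2 : β ∈ below θ d β := mem_below.2 ⟨hud β hβs, Or.inl rfl⟩
    have := Finset.card_pos.2 ⟨β, h2⟩
    omega
  | succ k ih =>
    intro u huI hud hlead hc hmeas
    classical
    set B : Finset (Fin n →₀ ℕ) :=
      u.support.filter (fun β => β ≠ m ∧ monomial β (1:K) ∈ iniIdeal (wo θ) I) with hB
    rcases B.eq_empty_or_nonempty with hBe | hBne
    · refine ⟨u, huI, hud, hlead, hc, fun β hβs hβne hβmem => ?_⟩
      have : β ∈ B := Finset.mem_filter.2 ⟨hβs, hβne, hβmem⟩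
      rw [hBe] at this
      simp at this
    obtain ⟨β, hβB, hβmax⟩ := exists_rmax (wo θ) (wo_trichot θ) (wo_trans θ) hBne
    obtain ⟨hβsup, hβne, hβmem⟩ := Finset.mem_filter.1 hβB
    have hβdeg : β.degree = d := hud β hβsup
    have hwoβm : wo θ β m := by
      rcases hlead.2 β hβsup with heq | hwo
      · exact absurd heq hβne
      · exact hwo
    -- find a divisor in the lead set
    obtain ⟨μ, hμLd, hμle⟩ := monomial_mem_iniIdeal_iff.1 hβmem
    obtain ⟨v, hvI, hvHg, hvlead, hvmonic⟩ := exists_homog_monic_lead hI hμLd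
    set a : Fin n →₀ ℕ := β - μ with ha
    have haμ : a + μ = β := by rw [ha]; exact tsub_add_cancel_of_le hμle
    set t : MvPolynomial (Fin n) K := monomial a (coeff β u) * v with ht
    have hk' : coeff β u ≠ 0 := MvPolynomial.mem_support_iff.1 hβsup
    have htI : t ∈ I := Ideal.mul_mem_left _ _ hvI
    have htlead : leadOf (wo θ) t β := by
      have := leadOf_monomial_mul (θ := θ) (a := a) hk' hvlead
      rw [haμ] at this
      exact this
    have htcoeff : coeff β t = coeff β u := by
      rw [ht, ← haμ, MvPolynomial.coeff_monomial_mul, hvmonic, mul_one]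
    have htHg : Hg t d := by
      intro χ hχ
      obtain ⟨hle, hsup⟩ := mem_support_monomial_mul (ht ▸ hχ)
      have hχeq : χ - a + a = χ := tsub_add_cancel_of_le hle
      have : χ.degree = (χ - a).degree + a.degree := by
        conv_lhs => rw [← hχeq]
        rw [degree_add, add_comm]
      rw [this, hvHg _ hsup]
      have : μ.degree + a.degree = β.degree := by rw [← haμ, degree_add, add_comm]
      rw [this, hβdeg]
    set u' : MvPolynomial (Fin n) K := u - t with hu'
    have hu'I : u' ∈ I := I.sub_mem huI htI
    have hu'supp : u'.support ⊆ u.support ∪ t.support := support_sub_subset u t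
    have hu'Hg : Hg u' d := by
      intro χ hχ
      rcases Finset.mem_union.1 (hu'supp hχ) with h | h
      · exact hud χ h
      · exact htHg χ h
    have hmnott : m ∉ t.support := by
      intro hc'
      rcases htlead.2 m hc' with heq | hwo
      · exact hβne heq.symm
      · exact wo_asymm hwo hwoβm
    have hu'c : coeff m u' = 1 := by
      rw [hu', MvPolynomial.coeff_sub, MvPolynomial.notMem_support_iff.1 hmnott, sub_zero, hc]
    have hβnot : β ∉ u'.support := by
      rw [MvPolynomial.notMem_support_iff, hu', MvPolynomial.coeff_sub, htcoeff, sub_self]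
    have hu'lead : leadOf (wo θ) u' m := by
      refine ⟨MvPolynomial.mem_support_iff.2 (by rw [hu'c]; exact one_ne_zero), ?_⟩
      intro χ hχ
      rcases Finset.mem_union.1 (hu'supp hχ) with h | h
      · exact hlead.2 χ h
      · rcases htlead.2 χ h with heq | hwo
        · exact Or.inr (heq ▸ hwoβm)
        · exact Or.inr (wo_trans θ _ _ _ hwo hwoβm)
    refine ih u' hu'I hu'Hg hu'lead hu'c ?_
    intro γ hγs hγne hγmem
    have hγβ : wo θ γ β := by
      have hγneβ : γ ≠ β := fun hcon => hβnot (hcon ▸ hγs)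
      rcases Finset.mem_union.1 (hu'supp hγs) with h | h
      · have hγB : γ ∈ B := Finset.mem_filter.2 ⟨h, hγne, hγmem⟩
        rcases hβmax γ hγB with heq | hwo
        · exact absurd heq hγneβ
        · exact hwo
      · rcases htlead.2 γ h with heq | hwo
        · exact absurd heq hγneβ
        · exact hwo
    have h1 : (below θ d γ).card < (below θ d β).card :=
      below_card_lt hγβ (hu'Hg γ hγs) hβdeg
    have h2 := hmeas β hβsup hβne hβmem
    omega

end StGF
namespace StGF

open MvPolynomial

variable {K : Type*} [Field K] {n : ℕ}

/-- Existence of a reduced Gröbner basis with all the structural properties we need. -/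
theorem exists_goodRGB (θ : Fin n → ℝ) {I : Ideal (MvPolynomial (Fin n) K)}
    (hI : IsHomogIdeal I) :
    ∃ G : Finset (MvPolynomial (Fin n) K),
      IsRGB (wo θ) I G ∧
      (∀ g ∈ G, g ∈ I ∧ (∃ d, Hg g d) ∧ ∃ m, leadOf (wo θ) g m ∧ coeff m g = 1 ∧
        (∀ β ∈ g.support, β ≠ m → monomial β (1:K) ∉ iniIdeal (wo θ) I) ∧
        (∀ μ, μ ≤ m → μ ≠ m → monomial μ (1:K) ∉ iniIdeal (wo θ) I)) ∧
      (∀ μ, monomial μ (1:K) ∈ iniIdeal (wo θ) I →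
        (∀ μ', μ' ≤ μ → μ' ≠ μ → monomial μ' (1:K) ∉ iniIdeal (wo θ) I) →
        ∃ g ∈ G, leadOf (wo θ) g μ) ∧
      (∀ μ, monomial μ (1:K) ∈ iniIdeal (wo θ) I ↔
        ∃ g ∈ G, ∃ mg, leadOf (wo θ) g mg ∧ mg ≤ μ) := by
  classical
  obtain ⟨Min, hMinLd, hmiff, hanti, hspan⟩ := exists_min_antichain (r := wo θ) I
  -- minimality of elements of Min
  have hminimal : ∀ m ∈ Min, ∀ μ, μ ≤ m → μ ≠ m → monomial μ (1:K) ∉ iniIdeal (wo θ) I := by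
    intro m hm μ hle hne hmem
    obtain ⟨ν, hνMin, hνle⟩ := (hmiff μ).1 hmem
    have hνm : ν = m := hanti ν hνMin m hm (hνle.trans hle)
    rw [hνm] at hνle
    exact hne (le_antisymm hle hνle)
  -- construct a reduced element for each minimal generator
  have hex : ∀ m ∈ Min, ∃ g, g ∈ I ∧ Hg g m.degree ∧ leadOf (wo θ) g m ∧ coeff m g = 1 ∧
      (∀ β ∈ g.support, β ≠ m → monomial β (1:K) ∉ iniIdeal (wo θ) I) := by
    intro m hm
    obtain ⟨u, huI, huHg, hulead, humonic⟩ := exists_homog_monic_lead hI (hMinLd hm)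
    obtain ⟨g, hgI, hgHg, hglead, hgmonic, hgtails⟩ :=
      reduce_tails hI (degMons n m.degree).card u huI huHg hulead humonic
        (fun β hβ _ _ => by
          classical
          exact Finset.card_le_card (by
            intro χ hχ
            exact mem_degMons.2 (mem_below.1 hχ).1))
    exact ⟨g, hgI, hgHg, hglead, hgmonic, hgtails⟩
  choose gf hgf using hex
  set G : Finset (MvPolynomial (Fin n) K) := Min.attach.image (fun x => gf x.1 x.2) with hG
  have hGmem : ∀ g, g ∈ G ↔ ∃ m, ∃ hm : m ∈ Min, gf m hm = g := by
    intro g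
    rw [hG]
    simp [Finset.mem_image, Finset.mem_attach, Subtype.exists]
  -- unique lead of each gf
  have hleaduni : ∀ m (hm : m ∈ Min) m', leadOf (wo θ) (gf m hm) m' → m' = m := by
    intro m hm m' hl
    exact (leadOf_unique (wo_irrefl θ) (wo_trans θ) hl (hgf m hm).2.2.1).symm ▸ rfl
  have hG0 : (0 : MvPolynomial (Fin n) K) ∉ G := by
    intro h0
    obtain ⟨m, hm, heq⟩ := (hGmem 0).1 h0
    have := (hgf m hm).2.2.2.1
    rw [heq] at this
    simp at this
  have hGI : (↑G : Set (MvPolynomial (Fin n) K)) ⊆ ↑I := by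
    intro g hg
    obtain ⟨m, hm, rfl⟩ := (hGmem g).1 hg
    exact (hgf m hm).1
  -- the span condition
  have hsetEq : {p | ∃ f ∈ G, ∃ m', leadOf (wo θ) f m' ∧ p = monomial m' (1:K)}
      = (fun m => monomial m (1 : K)) '' ↑Min := by
    ext p
    constructor
    · rintro ⟨f, hf, m', hl, rfl⟩
      obtain ⟨m, hm, rfl⟩ := (hGmem f).1 hf
      rw [hleaduni m hm m' hl]
      exact ⟨m, hm, rfl⟩
    · rintro ⟨m, hm, rfl⟩
      exact ⟨gf m hm, (hGmem _).2 ⟨m, hm, rfl⟩, m, (hgf m hm).2.2.1, rfl⟩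
  have hIsGB : IsGB (wo θ) I G := ⟨hGI, hG0, by rw [hsetEq]; exact hspan⟩
  refine ⟨G, ⟨hIsGB, ?_, ?_⟩, ?_, ?_, ?_⟩
  · -- monic
    intro f hf m' hl
    obtain ⟨m, hm, rfl⟩ := (hGmem f).1 hf
    rw [hleaduni m hm m' hl]
    exact (hgf m hm).2.2.2.1
  · -- interreduced
    intro f hf g hg hfg mf hlf μ hμ
    obtain ⟨m₁, hm₁, rfl⟩ := (hGmem f).1 hf
    obtain ⟨m₂, hm₂, rfl⟩ := (hGmem g).1 hg
    have hm₁₂ : m₁ ≠ m₂ := by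
      rintro rfl
      exact hfg rfl
    rw [hleaduni m₁ hm₁ mf hlf]
    intro hle
    by_cases hμm : μ = m₂
    · rw [hμm] at hle
      exact hm₁₂ (hanti m₁ hm₁ m₂ hm₂ hle)
    · exact (hgf m₂ hm₂).2.2.2.2 μ hμ hμm ((hmiff μ).2 ⟨m₁, hm₁, hle⟩)
  · -- structural data of each element
    intro g hg
    obtain ⟨m, hm, rfl⟩ := (hGmem g).1 hg
    exact ⟨(hgf m hm).1, ⟨m.degree, (hgf m hm).2.1⟩, m, (hgf m hm).2.2.1,
      (hgf m hm).2.2.2.1, (hgf m hm).2.2.2.2, hminimal m hm⟩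
  · -- realization of minimal nonstandard monomials
    intro μ hμmem hμmin
    obtain ⟨m, hmMin, hmle⟩ := (hmiff μ).1 hμmem
    have : m = μ := by
      by_contra hne
      exact hμmin m hmle hne ((hmiff m).2 ⟨m, hmMin, le_rfl⟩)
    subst this
    exact ⟨gf m hmMin, (hGmem _).2 ⟨m, hmMin, rfl⟩, (hgf m hmMin).2.2.1⟩
  · -- membership iff divisibility by a lead of G
    intro μ
    constructor
    · intro hμ
      obtain ⟨m, hmMin, hmle⟩ := (hmiff μ).1 hμ
      exact ⟨gf m hmMin, (hGmem _).2 ⟨m, hmMin, rfl⟩, m, (hgf m hmMin).2.2.1, hmle⟩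
    · rintro ⟨g, hg, mg, hlg, hle⟩
      obtain ⟨m, hm, rfl⟩ := (hGmem g).1 hg
      rw [hleaduni m hm mg hlg] at hle
      exact (hmiff μ).2 ⟨m, hm, hle⟩

end StGF
namespace StGF

open MvPolynomial

variable {K : Type*} [Field K] {n : ℕ}

/-- Division: the weighted initial ideal of a homogeneous ideal is generated by the
initial forms of (the elements of) a Gröbner basis w.r.t. the order `wo θ`. -/
theorem iniIdealW_eq_span_iniW_GB (θ : Fin n → ℝ) {I : Ideal (MvPolynomial (Fin n) K)}
    (hI : IsHomogIdeal I) (G : Finset (MvPolynomial (Fin n) K))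
    (hGI : ∀ g ∈ G, g ∈ I)
    (hGhom : ∀ g ∈ G, ∃ d, Hg g d)
    (hPG : ∀ μ, monomial μ (1:K) ∈ iniIdeal (wo θ) I ↔
      ∃ g ∈ G, ∃ mg, leadOf (wo θ) g mg ∧ mg ≤ μ) :
    iniIdealW θ I = Ideal.span ((iniW θ) '' ↑G) := by
  classical
  apply le_antisymm
  · -- the hard inclusion, by division
    have key : ∀ k : ℕ, ∀ d : ℕ, ∀ u : MvPolynomial (Fin n) K, u ∈ I → Hg u d → u ≠ 0 →
        (∀ m, leadOf (wo θ) u m → (below θ d m).card ≤ k) →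
        iniW θ u ∈ Ideal.span ((iniW θ) '' ↑G) := by
      intro k
      induction k using Nat.strong_induction_on with
      | _ k ih =>
        intro d u huI huHg hu0 hmeas
        obtain ⟨m, hlead⟩ := exists_leadOf θ hu0
        have hmdeg : m.degree = d := huHg m hlead.1
        have hmmem : monomial m (1:K) ∈ iniIdeal (wo θ) I :=
          monomial_mem_of_ldSet ⟨u, huI, hu0, hlead⟩
        obtain ⟨g, hgG, mg, hglead, hgle⟩ := (hPG m).1 hmmem
        obtain ⟨dg, hgHg⟩ := hGhom g hgG
        have hg0 : g ≠ 0 := by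
          intro hc
          rw [hc] at hglead
          exact absurd hglead.1 (by simp)
        have hmgdeg : mg.degree = dg := hgHg mg hglead.1
        set c : K := coeff m u with hcdef
        have hc0 : c ≠ 0 := MvPolynomial.mem_support_iff.1 hlead.1
        set cg : K := coeff mg g with hcgdef
        have hcg0 : cg ≠ 0 := MvPolynomial.mem_support_iff.1 hglead.1
        set a : Fin n →₀ ℕ := m - mg with ha
        have hamg : a + mg = m := by rw [ha]; exact tsub_add_cancel_of_le hgle
        set t : MvPolynomial (Fin n) K := monomial a (c * cg⁻¹) * g with ht
        have hccg : c * cg⁻¹ ≠ 0 := mul_ne_zero hc0 (inv_ne_zero hcg0)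
        have htI : t ∈ I := Ideal.mul_mem_left _ _ (hGI g hgG)
        have htlead : leadOf (wo θ) t m := by
          have := leadOf_monomial_mul (θ := θ) (a := a) hccg hglead
          rw [hamg] at this
          exact this
        have htcoeff : coeff m t = c := by
          rw [ht, ← hamg, MvPolynomial.coeff_monomial_mul, ← hcgdef]
          field_simp
        have htHg : Hg t d := by
          intro χ hχ
          obtain ⟨hle, hsup⟩ := mem_support_monomial_mul (ht ▸ hχ)
          have hχeq : χ - a + a = χ := tsub_add_cancel_of_le hle
          have h1 : χ.degree = (χ - a).degree + a.degree := by
            conv_lhs => rw [← hχeq]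
            rw [degree_add, add_comm]
          have h2 : mg.degree + a.degree = m.degree := by
            rw [← hamg, degree_add, add_comm]
          rw [h1, hgHg _ hsup, ← hmgdeg] at *
          omega
        have ht0 : t ≠ 0 := by
          intro hc'
          rw [hc'] at htcoeff
          exact hc0 (by rw [← htcoeff]; simp)
        set u' : MvPolynomial (Fin n) K := u - t with hu'
        have hu'I : u' ∈ I := I.sub_mem huI htI
        have hu'supp : u'.support ⊆ u.support ∪ t.support := support_sub_subset u t
        have hu'Hg : Hg u' d := fun χ hχ => by
          rcases Finset.mem_union.1 (hu'supp hχ) with h | h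
          · exact huHg χ h
          · exact htHg χ h
        have hmu' : coeff m u' = 0 := by
          rw [hu', MvPolynomial.coeff_sub, htcoeff, hcdef, sub_self]
        have hu'wo : ∀ χ ∈ u'.support, wo θ χ m := by
          intro χ hχ
          have hχm : χ ≠ m := by
            intro hcon
            rw [hcon] at hχ
            exact MvPolynomial.mem_support_iff.1 hχ hmu'
          rcases Finset.mem_union.1 (hu'supp hχ) with h | h
          · rcases hlead.2 χ h with heq | hwo
            · exact absurd heq hχm
            · exact hwo
          · rcases htlead.2 χ h with heq | hwo
            · exact absurd heq hχm
            · exact hwo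
        -- weight bookkeeping
        set W : ℝ := wt θ m with hW
        have hmface : m ∈ face θ u := mem_face_of_leadOf hlead
        have hbu : ∀ χ ∈ u.support, wt θ χ ≤ W := (mem_face_iff.1 hmface).2
        have hbt : ∀ χ ∈ t.support, wt θ χ ≤ W := by
          intro χ hχ
          rcases htlead.2 χ hχ with heq | hwo
          · rw [heq]
          · exact wt_le_of_wo hwo
        have hbu' : ∀ χ ∈ u'.support, wt θ χ ≤ W := by
          intro χ hχ
          rcases Finset.mem_union.1 (hu'supp hχ) with h | h
          · exact hbu χ h
          · exact hbt χ h
        have hslcu : iniW θ u = slc θ W u := (slc_eq_iniW hu0 hmface rfl).symm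
        have hsplit : slc θ W u = slc θ W t + slc θ W u' := by
          have : u = t + u' := by rw [hu']; ring
          rw [this, slc_add]
        have hslct : slc θ W t ∈ Ideal.span ((iniW θ) '' ↑G) := by
          have hmfacet : m ∈ face θ t := mem_face_of_leadOf htlead
          have h1 : slc θ W t = iniW θ t := slc_eq_iniW ht0 hmfacet rfl
          have h2 : iniW θ t = monomial a (c * cg⁻¹) * iniW θ g := by
            rw [ht]
            exact iniW_monomial_mul θ a hccg g
          rw [h1, h2]
          exact Ideal.mul_mem_left _ _ (Ideal.subset_span ⟨g, hgG, rfl⟩)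
        have hslcu' : slc θ W u' ∈ Ideal.span ((iniW θ) '' ↑G) := by
          by_cases hu'0 : u' = 0
          · rw [hu'0, slc_zero]
            exact Ideal.zero_mem _
          by_cases hz : slc θ W u' = 0
          · rw [hz]
            exact Ideal.zero_mem _
          rw [← iniW_eq_slc_of_bound hbu' hz]
          obtain ⟨m', hlead'⟩ := exists_leadOf θ hu'0
          have hwom' : wo θ m' m := hu'wo m' hlead'.1
          have hcard : (below θ d m').card < (below θ d m).card :=
            below_card_lt hwom' (hu'Hg m' hlead'.1) hmdeg
          have hk : (below θ d m').card < k := lt_of_lt_of_le hcard (hmeas m hlead)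
          refine ih _ hk d u' hu'I hu'Hg hu'0 (fun m'' hl'' => ?_)
          rw [leadOf_unique (wo_irrefl θ) (wo_trans θ) hl'' hlead']
        rw [hslcu, hsplit]
        exact Ideal.add_mem _ hslct hslcu'
    -- reduce generators to the homogeneous case
    rw [iniIdealW_eq_span_homog θ hI]
    apply Ideal.span_le.2
    rintro p ⟨u, huI, ⟨d, hud⟩, rfl⟩
    by_cases hu0 : u = 0
    · rw [hu0, iniW_zero]
      exact Ideal.zero_mem _
    exact key (degMons n d).card d u huI hud hu0
      (fun m hm => Finset.card_le_card (fun χ hχ => mem_degMons.2 (mem_below.1 hχ).1))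
  · apply Ideal.span_le.2
    rintro p ⟨g, hgG, rfl⟩
    exact iniW_mem_iniIdealW (hGI g hgG)

end StGF
namespace StGF

open MvPolynomial

variable {K : Type*} [Field K] {n : ℕ}

/-! ### Face agreement on reduced elements (Step A) -/

theorem iniW_eq_of_sameIni {θ θ' : Fin n → ℝ} {I : Ideal (MvPolynomial (Fin n) K)}
    (E : iniIdealW θ I = iniIdealW θ' I)
    {g : MvPolynomial (Fin n) K} {m : Fin n →₀ ℕ}
    (hgI : g ∈ I) (hg0 : g ≠ 0) (hlead : leadOf (wo θ) g m)
    (htails : ∀ β ∈ g.support, β ≠ m → monomial β (1:K) ∉ iniIdeal (wo θ) I) :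
    iniW θ g = iniW θ' g := by
  have hp₀mem : iniW θ' g ∈ iniIdealW θ I := by
    rw [E]
    exact iniW_mem_iniIdealW hgI
  -- the lead is in the θ'-face as well
  have hmface' : m ∈ face θ' g := by
    by_contra hc
    obtain ⟨μ, hμsup, hμmem⟩ := exists_nonstandard_mem hp₀mem (iniW_ne_zero hg0)
    rw [support_iniW] at hμsup
    have hμg : μ ∈ g.support := (mem_face_iff.1 hμsup).1
    have hμm : μ ≠ m := fun hcon => hc (hcon ▸ hμsup)
    exact htails μ hμg hμm hμmem
  -- the difference is standard, hence zero
  set q : MvPolynomial (Fin n) K := iniW θ g - iniW θ' g with hq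
  have hqmem : q ∈ iniIdealW θ I :=
    Submodule.sub_mem _ (iniW_mem_iniIdealW hgI) hp₀mem
  have hqm : coeff m q = 0 := by
    rw [hq, MvPolynomial.coeff_sub, coeff_iniW_of_mem (mem_face_of_leadOf hlead),
      coeff_iniW_of_mem hmface', sub_self]
  by_contra hne
  have hq0 : q ≠ 0 := fun hcon => hne (by rw [← sub_eq_zero, ← hq]; exact hcon)
  obtain ⟨μ, hμsup, hμmem⟩ := exists_nonstandard_mem hqmem hq0
  have hμm : μ ≠ m := by
    intro hcon
    rw [hcon] at hμsup
    exact MvPolynomial.mem_support_iff.1 hμsup hqm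
  have hμg : μ ∈ g.support := by
    rcases Finset.mem_union.1 (support_sub_subset _ _ (hq ▸ hμsup)) with hh | hh
    · rw [support_iniW] at hh
      exact (mem_face_iff.1 hh).1
    · rw [support_iniW] at hh
      exact (mem_face_iff.1 hh).1
  exact htails μ hμg hμm hμmem

/-! ### Transfer of leading data through supports -/

theorem leadOf_congr {r : (Fin n →₀ ℕ) → (Fin n →₀ ℕ) → Prop}
    {f g : MvPolynomial (Fin n) K} (h : f.support = g.support) {m : Fin n →₀ ℕ}
    (hl : leadOf r f m) : leadOf r g m :=
  ⟨h ▸ hl.1, fun m' hm' => hl.2 m' (h ▸ hm')⟩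

theorem mem_cUGB {θ : Fin n → ℝ} (hθ : ∀ i, 0 < θ i) {I : Ideal (MvPolynomial (Fin n) K)}
    {G : Finset (MvPolynomial (Fin n) K)} (hRGB : IsRGB (wo θ) I G)
    {g : MvPolynomial (Fin n) K} (hg : g ∈ G) : g ∈ cUGB I :=
  ⟨wo θ, isMonomialOrder_wo hθ, G, hRGB, hg⟩

theorem cUGB_props {I : Ideal (MvPolynomial (Fin n) K)} {g : MvPolynomial (Fin n) K}
    (hg : g ∈ cUGB I) : g ∈ I ∧ g ≠ 0 := by
  obtain ⟨r, _, G, hRGB, hgG⟩ := hg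
  exact ⟨hRGB.1.1 hgG, fun hcon => hRGB.1.2.1 (hcon ▸ hgG)⟩

/-- The monomial initial ideals of `I` and `J` agree, given equal `cUGB` supports. -/
theorem iniIdeal_le_of_supp_subset {θ : Fin n → ℝ} (hθ : ∀ i, 0 < θ i)
    {I J : Ideal (MvPolynomial (Fin n) K)} (hI : IsHomogIdeal I)
    (hsub : (fun f : MvPolynomial (Fin n) K => f.support) '' cUGB I ⊆
            (fun f : MvPolynomial (Fin n) K => f.support) '' cUGB J) :
    iniIdeal (wo θ) I ≤ iniIdeal (wo θ) J := by
  obtain ⟨G, hRGB, hGdata, hGreal, hPG⟩ := exists_goodRGB θ hI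
  rw [iniIdeal]
  apply Ideal.span_le.2
  rintro p ⟨f, hfI, hf0, m, hlm, rfl⟩
  have hmm : monomial m (1:K) ∈ iniIdeal (wo θ) I :=
    monomial_mem_of_ldSet ⟨f, hfI, hf0, hlm⟩
  obtain ⟨g, hgG, mg, hglead, hgle⟩ := (hPG m).1 hmm
  have hgUGB : g ∈ cUGB I := mem_cUGB hθ hRGB hgG
  obtain ⟨g2, hg2UGB, hg2supp⟩ := hsub ⟨g, hgUGB, rfl⟩
  obtain ⟨hg2J, hg20⟩ := cUGB_props hg2UGB
  have hg2lead : leadOf (wo θ) g2 mg := leadOf_congr hg2supp.symm hglead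
  have : monomial mg (1:K) ∈ iniIdeal (wo θ) J :=
    monomial_mem_of_ldSet ⟨g2, hg2J, hg20, hg2lead⟩
  exact monomial_dvd_mem_iniIdeal this hgle

/-! ### The core inclusion -/

theorem core_incl {θ θ' : Fin n → ℝ} (hθ : ∀ i, 0 < θ i) (hθ' : ∀ i, 0 < θ' i)
    {I J : Ideal (MvPolynomial (Fin n) K)} (hI : IsHomogIdeal I) (hJ : IsHomogIdeal J)
    (h : (fun f : MvPolynomial (Fin n) K => f.support) '' cUGB I =
         (fun f : MvPolynomial (Fin n) K => f.support) '' cUGB J)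
    (E : iniIdealW θ I = iniIdealW θ' I) :
    iniIdealW θ J ≤ iniIdealW θ' J := by
  obtain ⟨GJ, hRGBJ, hGJdata, _, hPGJ⟩ := exists_goodRGB θ hJ
  obtain ⟨GI, hRGBI, hGIdata, hGIreal, hPGI⟩ := exists_goodRGB θ hI
  have MIJ : iniIdeal (wo θ) I = iniIdeal (wo θ) J :=
    le_antisymm (iniIdeal_le_of_supp_subset hθ hI h.le)
      (iniIdeal_le_of_supp_subset hθ hJ h.ge)
  -- each element of the J-side reduced GB has the same θ- and θ'-initial form
  have hC : ∀ g' ∈ GJ, iniW θ g' = iniW θ' g' := by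
    intro g' hg'
    obtain ⟨hg'J, _, m', hg'lead, hg'monic, hg'tails, hg'min⟩ := hGJdata g' hg'
    have hg'0 : g' ≠ 0 := fun hcon => hRGBJ.1.2.1 (hcon ▸ hg')
    -- m' is a nonstandard monomial of I, minimal
    have hm'mem : monomial m' (1:K) ∈ iniIdeal (wo θ) I := by
      rw [MIJ]
      exact monomial_mem_of_ldSet ⟨g', hg'J, hg'0, hg'lead⟩
    have hm'min : ∀ μ', μ' ≤ m' → μ' ≠ m' → monomial μ' (1:K) ∉ iniIdeal (wo θ) I := by
      intro μ' hle hne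
      rw [MIJ]
      exact hg'min μ' hle hne
    obtain ⟨gs, hgsG, hgslead⟩ := hGIreal m' hm'mem hm'min
    obtain ⟨hgsI, _, mI, hgIlead, hgImonic, hgItails, _⟩ := hGIdata gs hgsG
    have hgs0 : gs ≠ 0 := fun hcon => hRGBI.1.2.1 (hcon ▸ hgsG)
    have hmIm' : mI = m' := leadOf_unique (wo_irrefl θ) (wo_trans θ) hgIlead hgslead
    rw [hmIm'] at hgIlead hgImonic hgItails
    -- supports coincide: use the cUGB support hypothesis
    obtain ⟨g₀, hg₀UGB, hg₀supp⟩ : ∃ g₀ ∈ cUGB I, g₀.support = g'.support := by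
      have : g'.support ∈ (fun f : MvPolynomial (Fin n) K => f.support) '' cUGB I := by
        rw [h]
        exact ⟨g', mem_cUGB hθ hRGBJ hg', rfl⟩
      obtain ⟨g₀, hg₀, hs⟩ := this
      exact ⟨g₀, hg₀, hs⟩
    obtain ⟨hg₀I, hg₀0⟩ := cUGB_props hg₀UGB
    have hm'g₀ : m' ∈ g₀.support := by
      rw [hg₀supp]
      exact hg'lead.1
    set c : K := coeff m' g₀ with hc
    have hc0 : c ≠ 0 := MvPolynomial.mem_support_iff.1 hm'g₀
    set h₀ : MvPolynomial (Fin n) K := c⁻¹ • g₀ - gs with hh₀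
    have hh₀I : h₀ ∈ I := I.sub_mem (smul_mem_ideal hg₀I) hgsI
    have hsmulsupp : (c⁻¹ • g₀).support = g'.support := by
      rw [support_smul_ne_zero (inv_ne_zero hc0), hg₀supp]
    have hh₀m' : coeff m' h₀ = 0 := by
      rw [hh₀, MvPolynomial.coeff_sub, MvPolynomial.coeff_smul, ← hc, hgImonic, smul_eq_mul,
        inv_mul_cancel₀ hc0, sub_self]
    have hh₀0 : h₀ = 0 := by
      by_contra hne
      obtain ⟨ν, hνlead⟩ := exists_leadOf θ hne
      have hνmem : monomial ν (1:K) ∈ iniIdeal (wo θ) I :=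
        monomial_mem_of_ldSet ⟨h₀, hh₀I, hne, hνlead⟩
      have hνm' : ν ≠ m' := by
        intro hcon
        rw [hcon] at hνlead
        exact MvPolynomial.mem_support_iff.1 hνlead.1 hh₀m'
      rcases Finset.mem_union.1 (support_sub_subset _ _ (hh₀ ▸ hνlead.1)) with hh | hh
      · rw [hsmulsupp] at hh
        refine hg'tails ν hh hνm' ?_
        rw [← MIJ]
        exact hνmem
      · exact hgItails ν hh hνm' hνmem
    have hsupp : gs.support = g'.support := by
      have : c⁻¹ • g₀ = gs := by
        rw [← sub_eq_zero, ← hh₀]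
        exact hh₀0
      rw [← this, hsmulsupp]
    -- Step A for gs
    have hstepA : iniW θ gs = iniW θ' gs :=
      iniW_eq_of_sameIni E hgsI hgs0 hgIlead hgItails
    have hfaceeq : face θ gs = face θ' gs := by
      rw [← support_iniW, ← support_iniW, hstepA]
    have hfaceg' : face θ g' = face θ' g' := by
      calc face θ g' = face θ gs := face_congr_support hsupp.symm
        _ = face θ' gs := hfaceeq
        _ = face θ' g' := face_congr_support hsupp
    exact iniW_eq_iniW_of_face_eq hfaceg'
  -- conclude via the division lemma
  have hspan : iniIdealW θ J = Ideal.span ((iniW θ) '' ↑GJ) :=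
    iniIdealW_eq_span_iniW_GB θ hJ GJ (fun g hg => (hGJdata g hg).1)
      (fun g hg => (hGJdata g hg).2.1) hPGJ
  rw [hspan]
  apply Ideal.span_le.2
  rintro p ⟨g', hg'GJ, rfl⟩
  rw [hC g' hg'GJ]
  exact iniW_mem_iniIdealW ((hGJdata g' hg'GJ).1)

/-! ### Positivization -/

theorem exists_pos_shift (ω : Fin n → ℝ) : ∃ c : ℝ, ∀ i, 0 < ω i + c := by
  refine ⟨1 + ∑ i, |ω i|, fun i => ?_⟩
  have h1 : |ω i| ≤ ∑ j, |ω j| :=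
    Finset.single_le_sum (fun j _ => abs_nonneg (ω j)) (Finset.mem_univ i)
  have h2 : -ω i ≤ |ω i| := neg_le_abs (ω i)
  linarith

end StGF

/-- If the canonical universal Gröbner bases of two homogeneous ideals
`I`, `J` have the same sets of supports, then `I` and `J` have the same Gröbner fan:
`in_ω(I) = in_{ω'}(I)` iff `in_ω(J) = in_{ω'}(J)` for all weights `ω, ω'`. -/
theorem groebnerFan_eq_of_supp_cUGB_eq {K : Type*} [Field K] {n : ℕ}
    (I J : Ideal (MvPolynomial (Fin n) K)) (hI : IsHomogIdeal I) (hJ : IsHomogIdeal J)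
    (h : (fun f : MvPolynomial (Fin n) K => f.support) '' cUGB I =
         (fun f : MvPolynomial (Fin n) K => f.support) '' cUGB J) :
    ∀ ω ω' : Fin n → ℝ, (iniIdealW ω I = iniIdealW ω' I ↔ iniIdealW ω J = iniIdealW ω' J) := by
  intro ω ω'
  obtain ⟨c, hc⟩ := StGF.exists_pos_shift ω
  obtain ⟨c', hc'⟩ := StGF.exists_pos_shift ω'
  rw [StGF.iniIdealW_shift ω c hI, StGF.iniIdealW_shift ω' c' hI,
      StGF.iniIdealW_shift ω c hJ, StGF.iniIdealW_shift ω' c' hJ]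
  constructor
  · intro E
    exact le_antisymm (StGF.core_incl hc hc' hI hJ h E)
      (StGF.core_incl hc' hc hI hJ h E.symm)
  · intro E
    exact le_antisymm (StGF.core_incl hc hc' hJ hI h.symm E)
      (StGF.core_incl hc' hc hJ hI h.symm E.symm)
end
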